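/- arXiv:math/0512359 — 13 statements merged into one kernel-verified Lean document; each statement's English description precedes it below -/
import Mathlib

section
/- Let M be the m×n Hankel matrix with entry (i,j) equal to x_{i+j-1} in R=K[x_1,…,x_{m+n-1}], m,n≥2. Then P_2(M), the ideal generated by 2×2 subpermanents of M, contains every product x_{i1+j1-1}·x_{i2+j2-1}·x_{i3+j3-1} of three entries of M taken from three distinct columns and two distinct rows (i.e., j_1,j_2,j_3 distinct and exactly two distinct values among i_1,i_2,i_3). -/
open MvPolynomial

/-- The variable `x_i` (1-based) in `K[x_1, …, x_N]`. -/
noncomputable def xv (K : Type*) [CommRing K] (N : ℕ) (i : ℕ) : MvPolynomial (Fin N) K :=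
  if h : 1 ≤ i ∧ i ≤ N then X (⟨i - 1, by omega⟩ : Fin N) else 0

/-- The ideal generated by the 2×2 subpermanents of the m×n Hankel matrix
`M_{ij} = x_{i+j-1}` in `K[x_1, …, x_{m+n-1}]`. -/
noncomputable def P2 (K : Type*) [CommRing K] (m n : ℕ) :
    Ideal (MvPolynomial (Fin (m + n - 1)) K) :=
  Ideal.span { p : MvPolynomial (Fin (m + n - 1)) K | ∃ a b c d : ℕ,
    1 ≤ a ∧ a < b ∧ b ≤ m ∧ 1 ≤ c ∧ c < d ∧ d ≤ n ∧
    p = xv K (m + n - 1) (a + c - 1) * xv K (m + n - 1) (b + d - 1)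
      + xv K (m + n - 1) (a + d - 1) * xv K (m + n - 1) (b + c - 1) }

/-- The 2×2 subpermanent relation holds for any pair of distinct rows and distinct
columns (not necessarily ordered). -/
lemma perm_mem (K : Type*) [CommRing K] (m n : ℕ) (a b c d : ℕ)
    (ha : 1 ≤ a) (hb : b ≤ m) (ha' : a ≤ m) (hb' : 1 ≤ b) (hab : a ≠ b)
    (hc : 1 ≤ c) (hd : d ≤ n) (hc' : c ≤ n) (hd' : 1 ≤ d) (hcd : c ≠ d) :
    xv K (m + n - 1) (a + c - 1) * xv K (m + n - 1) (b + d - 1)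
      + xv K (m + n - 1) (a + d - 1) * xv K (m + n - 1) (b + c - 1) ∈ P2 K m n := by
  apply Ideal.subset_span
  rcases lt_or_gt_of_ne hab with h1 | h1 <;> rcases lt_or_gt_of_ne hcd with h2 | h2
  · exact ⟨a, b, c, d, ha, h1, hb, hc, h2, hd, rfl⟩
  · exact ⟨a, b, d, c, ha, h1, hb, hd', h2, hc', by ring⟩
  · exact ⟨b, a, c, d, hb', h1, ha', hc, h2, hd, by ring⟩
  · exact ⟨b, a, d, c, hb', h1, ha', hd', h2, hc', by ring⟩

/-- Key lemma: a product of two entries in row `r` and one entry in row `s ≠ r`,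
from three distinct columns, lies in `P2`. -/
lemma key_mem {K : Type*} [Field K] (hK : ringChar K ≠ 2) (m n : ℕ)
    (r s c d e : ℕ)
    (hr : 1 ≤ r ∧ r ≤ m) (hs : 1 ≤ s ∧ s ≤ m) (hrs : r ≠ s)
    (hc : 1 ≤ c ∧ c ≤ n) (hd : 1 ≤ d ∧ d ≤ n) (he : 1 ≤ e ∧ e ≤ n)
    (hcd : c ≠ d) (hce : c ≠ e) (hde : d ≠ e) :
    xv K (m + n - 1) (r + c - 1) * xv K (m + n - 1) (r + d - 1)
      * xv K (m + n - 1) (s + e - 1) ∈ P2 K m n := by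
  set N := m + n - 1
  set T := xv K N (r + c - 1) * xv K N (r + d - 1) * xv K N (s + e - 1) with hT
  have hA := perm_mem K m n r s c e hr.1 hs.2 hr.2 hs.1 hrs hc.1 he.2 hc.2 he.1 hce
  have hB := perm_mem K m n r s c d hr.1 hs.2 hr.2 hs.1 hrs hc.1 hd.2 hc.2 hd.1 hcd
  have hC := perm_mem K m n r s d e hr.1 hs.2 hr.2 hs.1 hrs hd.1 he.2 hd.2 he.1 hde
  have h2T : (2 : MvPolynomial (Fin N) K) * T =
      xv K N (r + d - 1) * (xv K N (r + c - 1) * xv K N (s + e - 1)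
        + xv K N (r + e - 1) * xv K N (s + c - 1))
      + xv K N (r + c - 1) * (xv K N (r + d - 1) * xv K N (s + e - 1)
        + xv K N (r + e - 1) * xv K N (s + d - 1))
      - xv K N (r + e - 1) * (xv K N (r + c - 1) * xv K N (s + d - 1)
        + xv K N (r + d - 1) * xv K N (s + c - 1)) := by
    rw [hT]; ring
  have hmem : (2 : MvPolynomial (Fin N) K) * T ∈ P2 K m n := by
    rw [h2T]
    exact Ideal.sub_mem _ (Ideal.add_mem _ (Ideal.mul_mem_left _ _ hA)
      (Ideal.mul_mem_left _ _ hC)) (Ideal.mul_mem_left _ _ hB)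
  have h2 : (2 : K) ≠ 0 := Ring.two_ne_zero hK
  have : (C ((2 : K)⁻¹) : MvPolynomial (Fin N) K)
      * ((2 : MvPolynomial (Fin N) K) * T) = T := by
    have : (2 : MvPolynomial (Fin N) K) = C (2 : K) := by
      simp [map_ofNat]
    rw [this, ← mul_assoc, ← C_mul, inv_mul_cancel₀ h2, C_1, one_mul]
  rw [← this]
  exact Ideal.mul_mem_left _ _ hmem

/-- `P_2(M)` contains every product of three entries of the Hankel matrix taken from
three distinct columns and two distinct rows. -/
theorem stmt2 {K : Type*} [Field K] (hK : ringChar K ≠ 2) (m n : ℕ)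
    (hm : 2 ≤ m) (hn : 2 ≤ n)
    (i₁ i₂ i₃ j₁ j₂ j₃ : ℕ)
    (hi₁ : 1 ≤ i₁ ∧ i₁ ≤ m) (hi₂ : 1 ≤ i₂ ∧ i₂ ≤ m) (hi₃ : 1 ≤ i₃ ∧ i₃ ≤ m)
    (hj₁ : 1 ≤ j₁ ∧ j₁ ≤ n) (hj₂ : 1 ≤ j₂ ∧ j₂ ≤ n) (hj₃ : 1 ≤ j₃ ∧ j₃ ≤ n)
    (hcols : j₁ ≠ j₂ ∧ j₁ ≠ j₃ ∧ j₂ ≠ j₃)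
    (hrows : ({i₁, i₂, i₃} : Finset ℕ).card = 2) :
    xv K (m + n - 1) (i₁ + j₁ - 1) * xv K (m + n - 1) (i₂ + j₂ - 1)
      * xv K (m + n - 1) (i₃ + j₃ - 1) ∈ P2 K m n := by
  obtain ⟨h12, h13, h23⟩ := hcols
  have hcases : (i₁ = i₂ ∧ i₁ ≠ i₃) ∨ (i₁ = i₃ ∧ i₁ ≠ i₂) ∨ (i₂ = i₃ ∧ i₁ ≠ i₂) := by
    by_cases e12 : i₁ = i₂ <;> by_cases e13 : i₁ = i₃ <;> by_cases e23 : i₂ = i₃ <;>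
      simp_all [Finset.card_insert_of_notMem, Finset.mem_insert, Finset.mem_singleton] <;>
      omega
  rcases hcases with ⟨h, h'⟩ | ⟨h, h'⟩ | ⟨h, h'⟩
  · subst h
    exact key_mem hK m n i₁ i₃ j₁ j₂ j₃ hi₁ hi₃ h' hj₁ hj₂ hj₃ h12 h13 h23
  · subst h
    have := key_mem hK m n i₁ i₂ j₁ j₃ j₂ hi₁ hi₂ h' hj₁ hj₃ hj₂ h13 h12 (Ne.symm h23)
    have heq : xv K (m + n - 1) (i₁ + j₁ - 1) * xv K (m + n - 1) (i₂ + j₂ - 1)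
        * xv K (m + n - 1) (i₁ + j₃ - 1)
        = xv K (m + n - 1) (i₁ + j₁ - 1) * xv K (m + n - 1) (i₁ + j₃ - 1)
          * xv K (m + n - 1) (i₂ + j₂ - 1) := by ring
    rw [heq]; exact this
  · subst h
    have := key_mem hK m n i₂ i₁ j₂ j₃ j₁ hi₂ hi₁ (Ne.symm h') hj₂ hj₃ hj₁ h23
      (Ne.symm h12) (Ne.symm h13)
    have heq : xv K (m + n - 1) (i₁ + j₁ - 1) * xv K (m + n - 1) (i₂ + j₂ - 1)
        * xv K (m + n - 1) (i₂ + j₃ - 1)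
        = xv K (m + n - 1) (i₂ + j₂ - 1) * xv K (m + n - 1) (i₂ + j₃ - 1)
          * xv K (m + n - 1) (i₁ + j₁ - 1) := by ring
    rw [heq]; exact this
end

section
/- Let M be the m×n Hankel matrix with m,n≥3 over K of characteristic ≠2. Then P_2(M) contains all monomials of the form x_{i1+j1-1}^{e1} x_{i2+j2-1}^{e2} x_{i3+j3-1}^{e3} where i_1,i_2,i_3 are distinct rows, j_1,j_2,j_3 are distinct columns, and e_1,e_2,e_3 are positive integers summing to 4. -/
open MvPolynomial

/-- The 2×2 subpermanent on rows `i ≠ j` and columns `s ≠ t` (in any order)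
belongs to `P2`. -/
lemma perm_mem_s3 (K : Type*) [CommRing K] (m n : ℕ) (i j s t : ℕ)
    (hi : 1 ≤ i ∧ i ≤ m) (hj : 1 ≤ j ∧ j ≤ m) (hs : 1 ≤ s ∧ s ≤ n) (ht : 1 ≤ t ∧ t ≤ n)
    (hij : i ≠ j) (hst : s ≠ t) :
    xv K (m + n - 1) (i + s - 1) * xv K (m + n - 1) (j + t - 1)
      + xv K (m + n - 1) (i + t - 1) * xv K (m + n - 1) (j + s - 1) ∈ P2 K m n := by
  apply Ideal.subset_span
  rcases hij.lt_or_gt with h1 | h1 <;> rcases hst.lt_or_gt with h2 | h2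
  · exact ⟨i, j, s, t, hi.1, h1, hj.2, hs.1, h2, ht.2, rfl⟩
  · exact ⟨i, j, t, s, hi.1, h1, hj.2, ht.1, h2, hs.2, by ring⟩
  · exact ⟨j, i, s, t, hj.1, h1, hi.2, hs.1, h2, ht.2, by ring⟩
  · exact ⟨j, i, t, s, hj.1, h1, hi.2, ht.1, h2, hs.2, by ring⟩

/-- In a field of characteristic `≠ 2`, `2 ≠ 0`. -/
lemma two_ne_zero_of_ringChar {K : Type*} [Field K] (hK : ringChar K ≠ 2) : (2 : K) ≠ 0 := by
  intro h
  have hd : ringChar K ∣ 2 := by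
    have hs := ringChar.spec K 2
    rw [Nat.cast_ofNat] at hs
    exact hs.mp h
  rcases (Nat.dvd_prime Nat.prime_two).mp hd with h1 | h1
  · have h0 := (ringChar.spec K 1).mpr (by rw [h1])
    simp at h0
  · exact hK h1

/-- Key lemma: the square of a diagonal entry times two other diagonal entries
lies in `P2`, via the certificate
`2·A²EI = −CG·(AE+BD) + BG·(AF+CD) − AG·(BF+CE) + 2AE·(AI+CG)`. -/
lemma diag_sq_mem {K : Type*} [Field K] (hK : ringChar K ≠ 2) (m n : ℕ)
    (a b c p q r : ℕ)
    (ha : 1 ≤ a ∧ a ≤ m) (hb : 1 ≤ b ∧ b ≤ m) (hc : 1 ≤ c ∧ c ≤ m)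
    (hp : 1 ≤ p ∧ p ≤ n) (hq : 1 ≤ q ∧ q ≤ n) (hr : 1 ≤ r ∧ r ≤ n)
    (hab : a ≠ b) (hac : a ≠ c) (hpq : p ≠ q) (hpr : p ≠ r) (hqr : q ≠ r) :
    xv K (m + n - 1) (a + p - 1) ^ 2 * xv K (m + n - 1) (b + q - 1)
      * xv K (m + n - 1) (c + r - 1) ∈ P2 K m n := by
  set N := m + n - 1
  set xA := xv K N (a + p - 1) with hxA
  set xB := xv K N (a + q - 1) with hxB
  set xC := xv K N (a + r - 1) with hxC
  set xD := xv K N (b + p - 1) with hxD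
  set xE := xv K N (b + q - 1) with hxE
  set xF := xv K N (b + r - 1) with hxF
  set xG := xv K N (c + p - 1) with hxG
  set xI := xv K N (c + r - 1) with hxI
  have hP1 : xA * xE + xB * xD ∈ P2 K m n := perm_mem_s3 K m n a b p q ha hb hp hq hab hpq
  have hP2 : xA * xF + xC * xD ∈ P2 K m n := perm_mem_s3 K m n a b p r ha hb hp hr hab hpr
  have hP3 : xB * xF + xC * xE ∈ P2 K m n := perm_mem_s3 K m n a b q r ha hb hq hr hab hqr
  have hP4 : xA * xI + xC * xG ∈ P2 K m n := perm_mem_s3 K m n a c p r ha hc hp hr hac hpr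
  have hTT : xA ^ 2 * xE * xI + xA ^ 2 * xE * xI ∈ P2 K m n := by
    have hid : xA ^ 2 * xE * xI + xA ^ 2 * xE * xI =
        (-(xC * xG)) * (xA * xE + xB * xD) + (xB * xG) * (xA * xF + xC * xD)
          + (-(xA * xG)) * (xB * xF + xC * xE) + (xA * xE) * (xA * xI + xC * xG)
          + (xA * xE) * (xA * xI + xC * xG) := by ring
    rw [hid]
    exact add_mem (add_mem (add_mem (add_mem (Ideal.mul_mem_left _ _ hP1)
      (Ideal.mul_mem_left _ _ hP2)) (Ideal.mul_mem_left _ _ hP3))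
      (Ideal.mul_mem_left _ _ hP4)) (Ideal.mul_mem_left _ _ hP4)
  have h2 : (2 : K) ≠ 0 := two_ne_zero_of_ringChar hK
  have hrw : xA ^ 2 * xE * xI =
      C ((2 : K)⁻¹) * (xA ^ 2 * xE * xI + xA ^ 2 * xE * xI) := by
    have h1 : (C ((2 : K)⁻¹) * C (2 : K) : MvPolynomial (Fin N) K) = 1 := by
      rw [← map_mul, inv_mul_cancel₀ h2, map_one]
    have h2' : (C (2 : K) : MvPolynomial (Fin N) K) = 1 + 1 := by
      rw [show (2 : K) = 1 + 1 by norm_num, map_add, map_one]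
    calc xA ^ 2 * xE * xI = (C ((2 : K)⁻¹) * C (2 : K)) * (xA ^ 2 * xE * xI) := by
          rw [h1, one_mul]
      _ = C ((2 : K)⁻¹) * (xA ^ 2 * xE * xI + xA ^ 2 * xE * xI) := by
          rw [h2']; ring
  rw [hrw]
  exact Ideal.mul_mem_left _ _ hTT

/-- For `m, n ≥ 3`, `P_2(M)` contains all monomials with distinct rows, distinct
columns, and positive exponents summing to 4. -/
theorem stmt3 {K : Type*} [Field K] (hK : ringChar K ≠ 2) (m n : ℕ)
    (hm : 3 ≤ m) (hn : 3 ≤ n)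
    (i₁ i₂ i₃ j₁ j₂ j₃ e₁ e₂ e₃ : ℕ)
    (hi₁ : 1 ≤ i₁ ∧ i₁ ≤ m) (hi₂ : 1 ≤ i₂ ∧ i₂ ≤ m) (hi₃ : 1 ≤ i₃ ∧ i₃ ≤ m)
    (hj₁ : 1 ≤ j₁ ∧ j₁ ≤ n) (hj₂ : 1 ≤ j₂ ∧ j₂ ≤ n) (hj₃ : 1 ≤ j₃ ∧ j₃ ≤ n)
    (hrows : i₁ ≠ i₂ ∧ i₁ ≠ i₃ ∧ i₂ ≠ i₃)
    (hcols : j₁ ≠ j₂ ∧ j₁ ≠ j₃ ∧ j₂ ≠ j₃)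
    (he₁ : 1 ≤ e₁) (he₂ : 1 ≤ e₂) (he₃ : 1 ≤ e₃) (hsum : e₁ + e₂ + e₃ = 4) :
    xv K (m + n - 1) (i₁ + j₁ - 1) ^ e₁ * xv K (m + n - 1) (i₂ + j₂ - 1) ^ e₂
      * xv K (m + n - 1) (i₃ + j₃ - 1) ^ e₃ ∈ P2 K m n := by
  obtain ⟨h12, h13, h23⟩ := hrows
  obtain ⟨g12, g13, g23⟩ := hcols
  have hcases : (e₁ = 2 ∧ e₂ = 1 ∧ e₃ = 1) ∨ (e₁ = 1 ∧ e₂ = 2 ∧ e₃ = 1)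
      ∨ (e₁ = 1 ∧ e₂ = 1 ∧ e₃ = 2) := by omega
  rcases hcases with ⟨r1, r2, r3⟩ | ⟨r1, r2, r3⟩ | ⟨r1, r2, r3⟩ <;> subst r1 <;> subst r2 <;>
    subst r3
  · have h := diag_sq_mem hK m n i₁ i₂ i₃ j₁ j₂ j₃ hi₁ hi₂ hi₃ hj₁ hj₂ hj₃ h12 h13 g12 g13 g23
    rw [show xv K (m + n - 1) (i₁ + j₁ - 1) ^ 2 * xv K (m + n - 1) (i₂ + j₂ - 1) ^ 1
        * xv K (m + n - 1) (i₃ + j₃ - 1) ^ 1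
        = xv K (m + n - 1) (i₁ + j₁ - 1) ^ 2 * xv K (m + n - 1) (i₂ + j₂ - 1)
          * xv K (m + n - 1) (i₃ + j₃ - 1) from by ring]
    exact h
  · have h := diag_sq_mem hK m n i₂ i₁ i₃ j₂ j₁ j₃ hi₂ hi₁ hi₃ hj₂ hj₁ hj₃ h12.symm h23
      g12.symm g23 g13
    rw [show xv K (m + n - 1) (i₁ + j₁ - 1) ^ 1 * xv K (m + n - 1) (i₂ + j₂ - 1) ^ 2
        * xv K (m + n - 1) (i₃ + j₃ - 1) ^ 1
        = xv K (m + n - 1) (i₂ + j₂ - 1) ^ 2 * xv K (m + n - 1) (i₁ + j₁ - 1)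
          * xv K (m + n - 1) (i₃ + j₃ - 1) from by ring]
    exact h
  · have h := diag_sq_mem hK m n i₃ i₁ i₂ j₃ j₁ j₂ hi₃ hi₁ hi₂ hj₃ hj₁ hj₂ h13.symm h23.symm
      g13.symm g23.symm g12
    rw [show xv K (m + n - 1) (i₁ + j₁ - 1) ^ 1 * xv K (m + n - 1) (i₂ + j₂ - 1) ^ 1
        * xv K (m + n - 1) (i₃ + j₃ - 1) ^ 2
        = xv K (m + n - 1) (i₃ + j₃ - 1) ^ 2 * xv K (m + n - 1) (i₁ + j₁ - 1)
          * xv K (m + n - 1) (i₂ + j₂ - 1) from by ring]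
    exact h
end

section
/- Let M be the m×n Hankel matrix over a field K of characteristic ≠2. For all indices 1≤i≤j≤m+n-1 such that x_i and x_j both appear as entries in some 2×2 submatrix appropriately, the binomial relations imply: x_i x_j is congruent modulo P_2(M) to (-1)^{(j-i)/2} x_{(i+j)/2}^2 if i+j is even, and to (-1)^{(j-i-1)/2} x_{(i+j-1)/2} x_{(i+j+1)/2} if i+j is odd, provided all intermediate permanents x_k x_{k'} + x_{k+1} x_{k'-1} with i≤k<k'≤j lie in P_2(M). -/
open MvPolynomial

/-- Reduction of quadratic monomials modulo `P_2(M)`: if all the intermediate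
permanents lie in `P_2(M)`, then `x_i x_j` is congruent modulo `P_2(M)` to
`(-1)^{(j-i)/2} x_{(i+j)/2}^2` when `i+j` is even, and to
`(-1)^{(j-i-1)/2} x_{(i+j-1)/2} x_{(i+j+1)/2}` when `i+j` is odd. -/
theorem stmt4 {K : Type*} [Field K] (hK : ringChar K ≠ 2) (m n : ℕ)
    (hm : 2 ≤ m) (hmn : m ≤ n) (i j : ℕ) (hi : 1 ≤ i) (hij : i ≤ j)
    (hj : j ≤ m + n - 1)
    (hperm : ∀ k k' : ℕ, i ≤ k → k + 2 ≤ k' → k' ≤ j →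
      xv K (m + n - 1) k * xv K (m + n - 1) k'
        + xv K (m + n - 1) (k + 1) * xv K (m + n - 1) (k' - 1) ∈ P2 K m n) :
    ((i + j) % 2 = 0 →
      xv K (m + n - 1) i * xv K (m + n - 1) j
        - (-1 : MvPolynomial (Fin (m + n - 1)) K) ^ ((j - i) / 2)
          * xv K (m + n - 1) ((i + j) / 2) ^ 2 ∈ P2 K m n) ∧
    ((i + j) % 2 = 1 →
      xv K (m + n - 1) i * xv K (m + n - 1) j
        - (-1 : MvPolynomial (Fin (m + n - 1)) K) ^ ((j - i - 1) / 2)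
          * (xv K (m + n - 1) ((i + j - 1) / 2) * xv K (m + n - 1) ((i + j + 1) / 2))
        ∈ P2 K m n) := by
  clear hi hj
  suffices key : ∀ d i j : ℕ, i ≤ j → j - i = d →
      (∀ k k' : ℕ, i ≤ k → k + 2 ≤ k' → k' ≤ j →
        xv K (m + n - 1) k * xv K (m + n - 1) k'
          + xv K (m + n - 1) (k + 1) * xv K (m + n - 1) (k' - 1) ∈ P2 K m n) →
      (((i + j) % 2 = 0 →
        xv K (m + n - 1) i * xv K (m + n - 1) j
          - (-1 : MvPolynomial (Fin (m + n - 1)) K) ^ ((j - i) / 2)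
            * xv K (m + n - 1) ((i + j) / 2) ^ 2 ∈ P2 K m n) ∧
      ((i + j) % 2 = 1 →
        xv K (m + n - 1) i * xv K (m + n - 1) j
          - (-1 : MvPolynomial (Fin (m + n - 1)) K) ^ ((j - i - 1) / 2)
            * (xv K (m + n - 1) ((i + j - 1) / 2) * xv K (m + n - 1) ((i + j + 1) / 2))
          ∈ P2 K m n)) by
    exact key (j - i) i j hij rfl hperm
  clear hij hperm i j
  intro d
  induction d using Nat.strong_induction_on with
  | _ d ih =>
  intro i j hij hd hperm
  by_cases hd2 : d < 2
  · interval_cases d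
    · constructor
      · intro _
        simp only [show j = i from by omega, show (i - i) / 2 = 0 from by omega,
          show (i + i) / 2 = i from by omega, pow_zero, one_mul]
        have h0 : xv K (m + n - 1) i * xv K (m + n - 1) i
            - xv K (m + n - 1) i ^ 2 = 0 := by ring
        rw [h0]; exact Ideal.zero_mem _
      · intro hpar; omega
    · constructor
      · intro hpar; omega
      · intro _
        simp only [show (j - i - 1) / 2 = 0 from by omega,
          show (i + j - 1) / 2 = i from by omega,
          show (i + j + 1) / 2 = j from by omega, pow_zero, one_mul]
        have h0 : xv K (m + n - 1) i * xv K (m + n - 1) j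
            - xv K (m + n - 1) i * xv K (m + n - 1) j = 0 := by ring
        rw [h0]; exact Ideal.zero_mem _
  · have hP := hperm i j le_rfl (by omega) le_rfl
    have ihh := ih (d - 2) (by omega) (i + 1) (j - 1) (by omega) (by omega)
      (fun k k' h1 h2 h3 => hperm k k' (by omega) h2 (by omega))
    constructor
    · intro hpar
      have h1 := ihh.1 (by omega)
      rw [show (i + 1) + (j - 1) = i + j from by omega] at h1
      rw [show (j - i) / 2 = (j - 1 - (i + 1)) / 2 + 1 from by omega, pow_succ]
      have heq : xv K (m + n - 1) i * xv K (m + n - 1) j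
          - (-1 : MvPolynomial (Fin (m + n - 1)) K) ^ ((j - 1 - (i + 1)) / 2) * (-1)
            * xv K (m + n - 1) ((i + j) / 2) ^ 2
          = (xv K (m + n - 1) i * xv K (m + n - 1) j
              + xv K (m + n - 1) (i + 1) * xv K (m + n - 1) (j - 1))
            - (xv K (m + n - 1) (i + 1) * xv K (m + n - 1) (j - 1)
              - (-1 : MvPolynomial (Fin (m + n - 1)) K) ^ ((j - 1 - (i + 1)) / 2)
                * xv K (m + n - 1) ((i + j) / 2) ^ 2) := by ring
      rw [heq]
      exact Ideal.sub_mem _ hP h1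
    · intro hpar
      have h1 := ihh.2 (by omega)
      rw [show (i + 1) + (j - 1) = i + j from by omega] at h1
      rw [show (j - i - 1) / 2 = (j - 1 - (i + 1) - 1) / 2 + 1 from by omega, pow_succ]
      have heq : xv K (m + n - 1) i * xv K (m + n - 1) j
          - (-1 : MvPolynomial (Fin (m + n - 1)) K) ^ ((j - 1 - (i + 1) - 1) / 2) * (-1)
            * (xv K (m + n - 1) ((i + j - 1) / 2) * xv K (m + n - 1) ((i + j + 1) / 2))
          = (xv K (m + n - 1) i * xv K (m + n - 1) j
              + xv K (m + n - 1) (i + 1) * xv K (m + n - 1) (j - 1))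
            - (xv K (m + n - 1) (i + 1) * xv K (m + n - 1) (j - 1)
              - (-1 : MvPolynomial (Fin (m + n - 1)) K) ^ ((j - 1 - (i + 1) - 1) / 2)
                * (xv K (m + n - 1) ((i + j - 1) / 2)
                  * xv K (m + n - 1) ((i + j + 1) / 2))) := by ring
      rw [heq]
      exact Ideal.sub_mem _ hP h1
end

section
/- Let M be the 2×n Hankel matrix, n≥3, over a field K of characteristic ≠2. Then x_2^4 ∈ P_2(M), x_n^4 ∈ P_2(M), and x_i^3 ∈ P_2(M) for all 3≤i≤n-1. -/
open MvPolynomial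

lemma gen_mem {K : Type*} [CommRing K] {n : ℕ} (c d : ℕ) (h1 : 1 ≤ c) (h2 : c < d)
    (h3 : d ≤ n) :
    xv K (2 + n - 1) c * xv K (2 + n - 1) (d + 1)
      + xv K (2 + n - 1) d * xv K (2 + n - 1) (c + 1) ∈ P2 K 2 n := by
  apply Ideal.subset_span
  refine ⟨1, 2, c, d, le_refl 1, one_lt_two, le_refl 2, h1, h2, h3, ?_⟩
  rw [show 1 + c - 1 = c by omega, show 2 + d - 1 = d + 1 by omega,
    show 1 + d - 1 = d by omega, show 2 + c - 1 = c + 1 by omega]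

lemma mem_of_two_mul {K : Type*} [Field K] (hK : ringChar K ≠ 2) {n : ℕ}
    {f : MvPolynomial (Fin (2 + n - 1)) K} (h : 2 * f ∈ P2 K 2 n) : f ∈ P2 K 2 n := by
  have h2 : (2 : K) ≠ 0 := Ring.two_ne_zero hK
  have key : f = C ((2 : K)⁻¹) * (2 * f) := by
    rw [← mul_assoc, show (2 : MvPolynomial (Fin (2 + n - 1)) K) = C (2 : K) by
      simp [map_ofNat], ← C_mul, inv_mul_cancel₀ h2, C_1, one_mul]
  rw [key]
  exact Ideal.mul_mem_left _ _ h

/-- For the 2×n Hankel matrix, `x_2^4`, `x_n^4` and `x_i^3` (for `3 ≤ i ≤ n-1`)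
lie in `P_2(M)`. -/
theorem stmt5 {K : Type*} [Field K] (hK : ringChar K ≠ 2) (n : ℕ) (hn : 3 ≤ n) :
    xv K (2 + n - 1) 2 ^ 4 ∈ P2 K 2 n ∧ xv K (2 + n - 1) n ^ 4 ∈ P2 K 2 n ∧
    ∀ i : ℕ, 3 ≤ i → i ≤ n - 1 → xv K (2 + n - 1) i ^ 3 ∈ P2 K 2 n := by
  refine ⟨?_, ?_, ?_⟩
  · -- x_2^4
    apply mem_of_two_mul hK
    have m1 := gen_mem (K := K) (n := n) 1 2 (le_refl 1) one_lt_two (by omega)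
    have m2 := gen_mem (K := K) (n := n) 2 3 (by omega) (by omega) hn
    have m3 := gen_mem (K := K) (n := n) 1 3 (le_refl 1) (by omega) hn
    norm_num at m1 m2 m3
    have key : 2 * xv K (2 + n - 1) 2 ^ 4 =
        (2 * xv K (2 + n - 1) 2 ^ 2 - xv K (2 + n - 1) 1 * xv K (2 + n - 1) 3) *
          (xv K (2 + n - 1) 1 * xv K (2 + n - 1) 3 + xv K (2 + n - 1) 2 * xv K (2 + n - 1) 2)
        + xv K (2 + n - 1) 1 ^ 2 *
          (xv K (2 + n - 1) 2 * xv K (2 + n - 1) 4 + xv K (2 + n - 1) 3 * xv K (2 + n - 1) 3)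
        - xv K (2 + n - 1) 1 * xv K (2 + n - 1) 2 *
          (xv K (2 + n - 1) 1 * xv K (2 + n - 1) 4 + xv K (2 + n - 1) 3 * xv K (2 + n - 1) 2) := by
      ring
    rw [key]
    exact sub_mem (add_mem (Ideal.mul_mem_left _ _ m1) (Ideal.mul_mem_left _ _ m2))
      (Ideal.mul_mem_left _ _ m3)
  · -- x_n^4
    apply mem_of_two_mul hK
    have m1 := gen_mem (K := K) (n := n) (n - 1) n (by omega) (by omega) (le_refl n)
    have m2 := gen_mem (K := K) (n := n) (n - 2) (n - 1) (by omega) (by omega) (by omega)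
    have m3 := gen_mem (K := K) (n := n) (n - 2) n (by omega) (by omega) (le_refl n)
    rw [show n - 2 + 1 = n - 1 by omega] at m2 m3
    rw [show n - 1 + 1 = n by omega] at m1 m2
    have key : 2 * xv K (2 + n - 1) n ^ 4 =
        (2 * xv K (2 + n - 1) n ^ 2 - xv K (2 + n - 1) (n + 1) * xv K (2 + n - 1) (n - 1)) *
          (xv K (2 + n - 1) (n - 1) * xv K (2 + n - 1) (n + 1)
            + xv K (2 + n - 1) n * xv K (2 + n - 1) n)
        + xv K (2 + n - 1) (n + 1) ^ 2 *
          (xv K (2 + n - 1) (n - 2) * xv K (2 + n - 1) n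
            + xv K (2 + n - 1) (n - 1) * xv K (2 + n - 1) (n - 1))
        - xv K (2 + n - 1) (n + 1) * xv K (2 + n - 1) n *
          (xv K (2 + n - 1) (n - 2) * xv K (2 + n - 1) (n + 1)
            + xv K (2 + n - 1) n * xv K (2 + n - 1) (n - 1)) := by
      ring
    rw [key]
    exact sub_mem (add_mem (Ideal.mul_mem_left _ _ m1) (Ideal.mul_mem_left _ _ m2))
      (Ideal.mul_mem_left _ _ m3)
  · -- x_i^3
    intro i hi1 hi2
    apply mem_of_two_mul hK
    have m1 := gen_mem (K := K) (n := n) (i - 1) i (by omega) (by omega) (by omega)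
    have m2 := gen_mem (K := K) (n := n) (i - 1) (i + 1) (by omega) (by omega) (by omega)
    have m3 := gen_mem (K := K) (n := n) (i - 2) (i - 1) (by omega) (by omega) (by omega)
    have m4 := gen_mem (K := K) (n := n) (i - 2) (i + 1) (by omega) (by omega) (by omega)
    rw [show i - 1 + 1 = i by omega] at m1 m2
    rw [show i - 2 + 1 = i - 1 by omega] at m3 m4
    rw [show i - 1 + 1 = i by omega] at m3
    have key : 2 * xv K (2 + n - 1) i ^ 3 =
        2 * xv K (2 + n - 1) i *
          (xv K (2 + n - 1) (i - 1) * xv K (2 + n - 1) (i + 1)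
            + xv K (2 + n - 1) i * xv K (2 + n - 1) i)
        - xv K (2 + n - 1) (i - 1) *
          (xv K (2 + n - 1) (i - 1) * xv K (2 + n - 1) (i + 1 + 1)
            + xv K (2 + n - 1) (i + 1) * xv K (2 + n - 1) i)
        + xv K (2 + n - 1) (i + 1 + 1) *
          (xv K (2 + n - 1) (i - 2) * xv K (2 + n - 1) i
            + xv K (2 + n - 1) (i - 1) * xv K (2 + n - 1) (i - 1))
        - xv K (2 + n - 1) i *
          (xv K (2 + n - 1) (i - 2) * xv K (2 + n - 1) (i + 1 + 1)
            + xv K (2 + n - 1) (i + 1) * xv K (2 + n - 1) (i - 1)) := by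
      ring
    rw [key]
    exact sub_mem (add_mem (sub_mem (Ideal.mul_mem_left _ _ m1) (Ideal.mul_mem_left _ _ m2))
      (Ideal.mul_mem_left _ _ m3)) (Ideal.mul_mem_left _ _ m4)
end

section
/- Let M be the m×n Hankel matrix with m≥3, n≥5, over K of characteristic ≠2. Then for all 3≤i≤m+n-4, the monomial x_i x_{i+1} lies in P_2(M); indeed 2x_i x_{i+1} = (x_{i-1}x_{i+2}+x_i x_{i+1}) + (x_{i-2}x_{i+3}+x_i x_{i+1}) − (x_{i-2}x_{i+3}+x_{i-1}x_{i+2}), each summand being a 2×2 subpermanent of M. -/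
open MvPolynomial

/-- For the m×n Hankel matrix with `m ≥ 3`, `n ≥ 5`, the monomial `x_i x_{i+1}` lies
in `P_2(M)` for `3 ≤ i ≤ m+n-4`, via the stated identity of subpermanents. -/
theorem stmt8 {K : Type*} [Field K] (hK : ringChar K ≠ 2) (m n : ℕ)
    (hm : 3 ≤ m) (hn : 5 ≤ n) :
    ∀ i : ℕ, 3 ≤ i → i ≤ m + n - 4 →
      xv K (m + n - 1) i * xv K (m + n - 1) (i + 1) ∈ P2 K m n ∧
      2 * (xv K (m + n - 1) i * xv K (m + n - 1) (i + 1)) =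
        (xv K (m + n - 1) (i - 1) * xv K (m + n - 1) (i + 2)
          + xv K (m + n - 1) i * xv K (m + n - 1) (i + 1))
        + (xv K (m + n - 1) (i - 2) * xv K (m + n - 1) (i + 3)
          + xv K (m + n - 1) i * xv K (m + n - 1) (i + 1))
        - (xv K (m + n - 1) (i - 2) * xv K (m + n - 1) (i + 3)
          + xv K (m + n - 1) (i - 1) * xv K (m + n - 1) (i + 2)) := by
  intro i hi1 hi2
  set N := m + n - 1 with hN
  set Q := xv K N i * xv K N (i + 1) with hQ
  set A := xv K N (i - 1) * xv K N (i + 2) with hA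
  set B := xv K N (i - 2) * xv K N (i + 3) with hB
  have h2K : (2 : K) ≠ 0 := Ring.two_ne_zero hK
  -- first generator: A + Q
  have g1 : A + Q ∈ P2 K m n := by
    apply Ideal.subset_span
    refine ⟨min (m - 1) (i - 1), min (m - 1) (i - 1) + 1,
      i - min (m - 1) (i - 1), i - min (m - 1) (i - 1) + 2,
      by omega, by omega, by omega, by omega, by omega, by omega, ?_⟩
    rw [show min (m - 1) (i - 1) + (i - min (m - 1) (i - 1)) - 1 = i - 1 by omega,
      show min (m - 1) (i - 1) + 1 + (i - min (m - 1) (i - 1) + 2) - 1 = i + 2 by omega,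
      show min (m - 1) (i - 1) + (i - min (m - 1) (i - 1) + 2) - 1 = i + 1 by omega,
      show min (m - 1) (i - 1) + 1 + (i - min (m - 1) (i - 1)) - 1 = i by omega]
    rw [hA, hQ]; ring
  -- second generator: B + Q
  have g2 : B + Q ∈ P2 K m n := by
    apply Ideal.subset_span
    refine ⟨min (m - 2) (i - 2), min (m - 2) (i - 2) + 2,
      i - 1 - min (m - 2) (i - 2), i - 1 - min (m - 2) (i - 2) + 3,
      by omega, by omega, by omega, by omega, by omega, by omega, ?_⟩
    rw [show min (m - 2) (i - 2) + (i - 1 - min (m - 2) (i - 2)) - 1 = i - 2 by omega,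
      show min (m - 2) (i - 2) + 2 + (i - 1 - min (m - 2) (i - 2) + 3) - 1 = i + 3 by omega,
      show min (m - 2) (i - 2) + (i - 1 - min (m - 2) (i - 2) + 3) - 1 = i + 1 by omega,
      show min (m - 2) (i - 2) + 2 + (i - 1 - min (m - 2) (i - 2)) - 1 = i by omega]
    rw [hB, hQ]; ring
  -- third generator: B + A
  have g3 : B + A ∈ P2 K m n := by
    apply Ideal.subset_span
    refine ⟨min (m - 1) (i - 2), min (m - 1) (i - 2) + 1,
      i - 1 - min (m - 1) (i - 2), i - 1 - min (m - 1) (i - 2) + 4,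
      by omega, by omega, by omega, by omega, by omega, by omega, ?_⟩
    rw [show min (m - 1) (i - 2) + (i - 1 - min (m - 1) (i - 2)) - 1 = i - 2 by omega,
      show min (m - 1) (i - 2) + 1 + (i - 1 - min (m - 1) (i - 2) + 4) - 1 = i + 3 by omega,
      show min (m - 1) (i - 2) + (i - 1 - min (m - 1) (i - 2) + 4) - 1 = i + 2 by omega,
      show min (m - 1) (i - 2) + 1 + (i - 1 - min (m - 1) (i - 2)) - 1 = i - 1 by omega]
    rw [hB, hA]; ring
  have h2Q : (2 : MvPolynomial (Fin N) K) * Q ∈ P2 K m n := by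
    have := (P2 K m n).sub_mem ((P2 K m n).add_mem g1 g2) g3
    convert this using 1
    ring
  constructor
  · have hQeq : Q = C ((2 : K)⁻¹) * ((2 : MvPolynomial (Fin N) K) * Q) := by
      rw [← mul_assoc, show (2 : MvPolynomial (Fin N) K) = C (2 : K) from
        (map_ofNat (C : K →+* MvPolynomial (Fin N) K) 2).symm,
        ← C_mul, inv_mul_cancel₀ h2K, C_1, one_mul]
    rw [hQeq]
    exact Ideal.mul_mem_left _ _ h2Q
  · ring
end

section
/- Let M be the m×n Hankel matrix with m≥3, n≥5, over K of characteristic ≠2. Then x_i^2 ∈ P_2(M) for all 3≤i≤m+n-3. -/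
open MvPolynomial

/-- For the m×n Hankel matrix with `m ≥ 3`, `n ≥ 5`, `x_i^2 ∈ P_2(M)` for all
`3 ≤ i ≤ m+n-3`. -/
theorem stmt9 {K : Type*} [Field K] (hK : ringChar K ≠ 2) (m n : ℕ)
    (hm : 3 ≤ m) (hn : 5 ≤ n) :
    ∀ i : ℕ, 3 ≤ i → i ≤ m + n - 3 → xv K (m + n - 1) i ^ 2 ∈ P2 K m n := by
  intro i hi3 hiN
  set N := m + n - 1 with hN
  -- G1 : spread 1, inner square
  obtain ⟨a1, c1, ha1, hb1, hc1, hd1, hs1⟩ :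
      ∃ a c : ℕ, 1 ≤ a ∧ a + 1 ≤ m ∧ 1 ≤ c ∧ c + 1 ≤ n ∧ a + c = i :=
    ⟨min (m-1) (i-1), i - min (m-1) (i-1), by omega, by omega, by omega, by omega, by omega⟩
  -- G2 : spread 2, inner square
  obtain ⟨a2, c2, ha2, hb2, hc2, hd2, hs2⟩ :
      ∃ a c : ℕ, 1 ≤ a ∧ a + 2 ≤ m ∧ 1 ≤ c ∧ c + 2 ≤ n ∧ a + c = i - 1 :=
    ⟨min (m-2) (i-2), (i-1) - min (m-2) (i-2), by omega, by omega, by omega, by omega, by omega⟩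
  -- G3 : b - a = 1, d - c = 3
  obtain ⟨a3, c3, ha3, hb3, hc3, hd3, hs3⟩ :
      ∃ a c : ℕ, 1 ≤ a ∧ a + 1 ≤ m ∧ 1 ≤ c ∧ c + 3 ≤ n ∧ a + c = i - 1 :=
    ⟨min (m-1) (i-2), (i-1) - min (m-1) (i-2), by omega, by omega, by omega, by omega, by omega⟩
  have h1 : xv K N (i-1) * xv K N (i+1) + xv K N i * xv K N i ∈ P2 K m n := by
    apply Ideal.subset_span
    refine ⟨a1, a1+1, c1, c1+1, ha1, by omega, hb1, hc1, by omega, hd1, ?_⟩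
    have e1 : a1 + c1 - 1 = i - 1 := by omega
    have e2 : a1 + 1 + (c1 + 1) - 1 = i + 1 := by omega
    have e3 : a1 + (c1 + 1) - 1 = i := by omega
    have e4 : a1 + 1 + c1 - 1 = i := by omega
    rw [e1, e2, e3, e4]
  have h2 : xv K N (i-2) * xv K N (i+2) + xv K N i * xv K N i ∈ P2 K m n := by
    apply Ideal.subset_span
    refine ⟨a2, a2+2, c2, c2+2, ha2, by omega, hb2, hc2, by omega, hd2, ?_⟩
    have e1 : a2 + c2 - 1 = i - 2 := by omega
    have e2 : a2 + 2 + (c2 + 2) - 1 = i + 2 := by omega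
    have e3 : a2 + (c2 + 2) - 1 = i := by omega
    have e4 : a2 + 2 + c2 - 1 = i := by omega
    rw [e1, e2, e3, e4]
  have h3 : xv K N (i-2) * xv K N (i+2) + xv K N (i+1) * xv K N (i-1) ∈ P2 K m n := by
    apply Ideal.subset_span
    refine ⟨a3, a3+1, c3, c3+3, ha3, by omega, hb3, hc3, by omega, hd3, ?_⟩
    have e1 : a3 + c3 - 1 = i - 2 := by omega
    have e2 : a3 + 1 + (c3 + 3) - 1 = i + 2 := by omega
    have e3 : a3 + (c3 + 3) - 1 = i + 1 := by omega
    have e4 : a3 + 1 + c3 - 1 = i - 1 := by omega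
    rw [e1, e2, e3, e4]
  have hsum : (2 : MvPolynomial (Fin N) K) * xv K N i ^ 2 ∈ P2 K m n := by
    have := Ideal.sub_mem _ (Ideal.add_mem _ h1 h2) h3
    convert this using 1
    ring
  have h2K : (2 : K) ≠ 0 := Ring.two_ne_zero hK
  have key : xv K N i ^ 2 = C ((2:K)⁻¹) * ((2 : MvPolynomial (Fin N) K) * xv K N i ^ 2) := by
    rw [(map_ofNat C 2).symm, ← mul_assoc, ← C_mul,
      inv_mul_cancel₀ h2K, C_1, one_mul]
  rw [key]
  exact Ideal.mul_mem_left _ _ hsum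
end

section
/- Let M be the m×n Hankel matrix with m+n≥5 over K of characteristic ≠2. The minimal primes of P_2(M) are exactly P_1=(x_1,…,x_{m+n-2}) and P_2=(x_2,…,x_{m+n-1}). -/
open MvPolynomial

section Auxiliary

variable {K : Type*} [Field K]

private lemma sub_aeval_mem {σ : Type*} (s : Set σ) [DecidablePred (· ∈ s)]
    (p : MvPolynomial σ K) :
    p - aeval (fun j => if j ∈ s then 0 else X j) p ∈
      Ideal.span (X '' s : Set (MvPolynomial σ K)) := by
  induction p using MvPolynomial.induction_on with
  | C a => simp
  | add p q hp hq =>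
      rw [map_add]
      have h := add_mem hp hq
      convert h using 1
      ring
  | mul_X p j hp =>
      rw [map_mul, aeval_X]
      by_cases hj : j ∈ s
      · rw [if_pos hj, mul_zero, sub_zero]
        exact Ideal.mul_mem_left _ _ (Ideal.subset_span ⟨j, hj, rfl⟩)
      · rw [if_neg hj]
        have h := Ideal.mul_mem_right (X j) _ hp
        convert h using 1
        ring

private lemma span_X_isPrime {σ : Type*} (s : Set σ) [DecidablePred (· ∈ s)] :
    (Ideal.span (X '' s : Set (MvPolynomial σ K))).IsPrime := by
  have hker : Ideal.span (X '' s : Set (MvPolynomial σ K)) =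
      RingHom.ker (aeval (R := K) (fun j => if j ∈ s then 0 else X j) :
        MvPolynomial σ K →ₐ[K] MvPolynomial σ K) := by
    apply le_antisymm
    · rw [Ideal.span_le]
      rintro _ ⟨j, hj, rfl⟩
      simp [RingHom.mem_ker, hj]
    · intro p hp
      rw [RingHom.mem_ker] at hp
      have h := sub_aeval_mem (K := K) s p
      rw [hp, sub_zero] at h
      exact h
  rw [hker]
  exact RingHom.ker_isPrime _

private lemma xv_eq {K : Type*} [CommRing K] {N i : ℕ} (h1 : 1 ≤ i) (h2 : i ≤ N) :
    xv K N i = X (⟨i - 1, by omega⟩ : Fin N) := dif_pos ⟨h1, h2⟩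

private lemma xv_eq' {K : Type*} [CommRing K] {N : ℕ} (j : Fin N) :
    xv K N ((j : ℕ) + 1) = X j := by
  rw [xv_eq (by omega) j.isLt]
  exact congrArg X (Fin.ext (by simp))

private lemma hg_mem {K : Type*} [CommRing K] {m n : ℕ} (hm : 2 ≤ m) (hmn : m ≤ n) (k : ℕ)
    (hk1 : 2 ≤ k) (hk2 : k ≤ m + n - 2) :
    xv K (m+n-1) (k-1) * xv K (m+n-1) (k+1) + xv K (m+n-1) k * xv K (m+n-1) k
      ∈ P2 K m n := by
  apply Ideal.subset_span
  obtain ⟨a, c, ha1, ham, hc1, hcn, hac⟩ :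
      ∃ a c : ℕ, 1 ≤ a ∧ a + 1 ≤ m ∧ 1 ≤ c ∧ c + 1 ≤ n ∧ a + c = k :=
    ⟨min (k-1) (m-1), k - min (k-1) (m-1), by omega, by omega, by omega, by omega, by omega⟩
  refine ⟨a, a+1, c, c+1, ha1, by omega, ham, hc1, by omega, hcn, ?_⟩
  rw [show a + c - 1 = k - 1 from by omega, show a + 1 + (c + 1) - 1 = k + 1 from by omega,
    show a + (c + 1) - 1 = k from by omega, show a + 1 + c - 1 = k from by omega]

private lemma hh_mem {K : Type*} [CommRing K] {m n : ℕ} (hm : 2 ≤ m) (hmn : m ≤ n)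
    (h5 : 5 ≤ m + n) (k : ℕ) (hk1 : 2 ≤ k) (hk2 : k ≤ m + n - 3) :
    xv K (m+n-1) (k-1) * xv K (m+n-1) (k+2) + xv K (m+n-1) (k+1) * xv K (m+n-1) k
      ∈ P2 K m n := by
  apply Ideal.subset_span
  obtain ⟨a, c, ha1, ham, hc1, hcn, hac⟩ :
      ∃ a c : ℕ, 1 ≤ a ∧ a + 1 ≤ m ∧ 1 ≤ c ∧ c + 2 ≤ n ∧ a + c = k :=
    ⟨min (k-1) (m-1), k - min (k-1) (m-1), by omega, by omega, by omega, by omega, by omega⟩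
  refine ⟨a, a+1, c, c+2, ha1, by omega, ham, hc1, by omega, hcn, ?_⟩
  rw [show a + c - 1 = k - 1 from by omega, show a + 1 + (c + 2) - 1 = k + 2 from by omega,
    show a + (c + 2) - 1 = k + 1 from by omega, show a + 1 + c - 1 = k from by omega]

private lemma hG_mem {K : Type*} [CommRing K] {m n : ℕ} (hm : 2 ≤ m) (hmn : m ≤ n) :
    xv K (m+n-1) 1 * xv K (m+n-1) (m+n-1) + xv K (m+n-1) n * xv K (m+n-1) m
      ∈ P2 K m n := by
  apply Ideal.subset_span
  refine ⟨1, m, 1, n, le_rfl, by omega, le_rfl, le_rfl, by omega, le_rfl, ?_⟩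
  rw [show 1 + 1 - 1 = 1 from by omega, show 1 + n - 1 = n from by omega,
    show m + 1 - 1 = m from by omega]


private lemma X_notMem_span {σ : Type*} (s : Set σ) (j : σ) (hj : j ∉ s) :
    X j ∉ Ideal.span (X '' s : Set (MvPolynomial σ K)) := by
  classical
  intro h
  rw [mem_ideal_span_X_image] at h
  obtain ⟨i, hiS, hne⟩ := h (Finsupp.single j 1) (by rw [support_X]; simp)
  rw [Finsupp.single_apply] at hne
  split_ifs at hne with hij
  · exact hj (hij ▸ hiS)
  · exact hne rfl

variable {m n : ℕ}


private lemma key1 (hK : ringChar K ≠ 2) (hm : 2 ≤ m) (hmn : m ≤ n) (h5 : 5 ≤ m + n)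
    (k : ℕ) (hk1 : 2 ≤ k) (hk2 : k ≤ m + n - 3) :
    xv K (m+n-1) k * xv K (m+n-1) (k+1) ∈ (P2 K m n).radical := by
  have hA := hg_mem (K := K) hm hmn k (by omega) (by omega)
  have hB := hg_mem (K := K) hm hmn (k+1) (by omega) (by omega)
  rw [show k+1-1 = k from by omega, show k+1+1 = k+2 from rfl] at hB
  have hC := hh_mem (K := K) hm hmn h5 k (by omega) (by omega)
  have hq : (2 : MvPolynomial (Fin (m+n-1)) K) *
      ((xv K (m+n-1) k * xv K (m+n-1) (k+1))^2) ∈ P2 K m n := by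
    have hid : (2 : MvPolynomial (Fin (m+n-1)) K) *
        ((xv K (m+n-1) k * xv K (m+n-1) (k+1))^2)
        = xv K (m+n-1) (k+1) * xv K (m+n-1) (k+1) *
            (xv K (m+n-1) (k-1) * xv K (m+n-1) (k+1) + xv K (m+n-1) k * xv K (m+n-1) k)
          - xv K (m+n-1) (k-1) * xv K (m+n-1) (k+1) *
            (xv K (m+n-1) k * xv K (m+n-1) (k+2) + xv K (m+n-1) (k+1) * xv K (m+n-1) (k+1))
          + xv K (m+n-1) k * xv K (m+n-1) (k+1) *
            (xv K (m+n-1) (k-1) * xv K (m+n-1) (k+2) + xv K (m+n-1) (k+1) * xv K (m+n-1) k) := by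
      ring
    rw [hid]
    exact add_mem (sub_mem (Ideal.mul_mem_left _ _ hA) (Ideal.mul_mem_left _ _ hB))
      (Ideal.mul_mem_left _ _ hC)
  have h2 : (2 : K) ≠ 0 := Ring.two_ne_zero hK
  refine ⟨2, ?_⟩
  have heq : (xv K (m+n-1) k * xv K (m+n-1) (k+1))^2
      = C ((2:K)⁻¹) * ((2 : MvPolynomial (Fin (m+n-1)) K) *
          ((xv K (m+n-1) k * xv K (m+n-1) (k+1))^2)) := by
    rw [← mul_assoc,
      show ((2 : MvPolynomial (Fin (m+n-1)) K) = C (2:K)) from (map_ofNat C 2).symm,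
      ← map_mul, inv_mul_cancel₀ h2, map_one, one_mul]
  rw [heq]
  exact Ideal.mul_mem_left _ _ hq

private lemma key2 (hK : ringChar K ≠ 2) (hm : 2 ≤ m) (hmn : m ≤ n) (h5 : 5 ≤ m + n)
    (k : ℕ) (hk1 : 2 ≤ k) (hk2 : k ≤ m + n - 2) :
    xv K (m+n-1) k ∈ (P2 K m n).radical := by
  rcases le_or_gt k (m+n-3) with h | h
  · apply Ideal.mem_radical_of_pow_mem (m := 3)
    have hA := Ideal.le_radical (hg_mem (K := K) hm hmn k (by omega) (by omega))
    have hB := key1 hK hm hmn h5 k hk1 h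
    have hid : xv K (m+n-1) k ^ 3
        = xv K (m+n-1) k *
            (xv K (m+n-1) (k-1) * xv K (m+n-1) (k+1) + xv K (m+n-1) k * xv K (m+n-1) k)
          - xv K (m+n-1) (k-1) * (xv K (m+n-1) k * xv K (m+n-1) (k+1)) := by ring
    rw [hid]
    exact sub_mem (Ideal.mul_mem_left _ _ hA) (Ideal.mul_mem_left _ _ hB)
  · apply Ideal.mem_radical_of_pow_mem (m := 3)
    have hA := Ideal.le_radical (hg_mem (K := K) hm hmn k (by omega) (by omega))
    have hB := key1 hK hm hmn h5 (k-1) (by omega) (by omega)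
    rw [show k-1+1 = k from by omega] at hB
    have hid : xv K (m+n-1) k ^ 3
        = xv K (m+n-1) k *
            (xv K (m+n-1) (k-1) * xv K (m+n-1) (k+1) + xv K (m+n-1) k * xv K (m+n-1) k)
          - xv K (m+n-1) (k+1) * (xv K (m+n-1) (k-1) * xv K (m+n-1) k) := by ring
    rw [hid]
    exact sub_mem (Ideal.mul_mem_left _ _ hA) (Ideal.mul_mem_left _ _ hB)

private lemma key3 (hK : ringChar K ≠ 2) (hm : 2 ≤ m) (hmn : m ≤ n) (h5 : 5 ≤ m + n) :
    xv K (m+n-1) 1 * xv K (m+n-1) (m+n-1) ∈ (P2 K m n).radical := by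
  have hGm := Ideal.le_radical (hG_mem (K := K) hm hmn)
  have hmrad := key2 hK hm hmn h5 m hm (by omega)
  have h := sub_mem hGm (Ideal.mul_mem_left _ (xv K (m+n-1) n) hmrad)
  convert h using 1
  ring

end Auxiliary

/-- The minimal primes of `P_2(M)` are exactly `(x_1, …, x_{m+n-2})` and
`(x_2, …, x_{m+n-1})`. -/
theorem stmt11 {K : Type*} [Field K] (hK : ringChar K ≠ 2) (m n : ℕ)
    (hm : 2 ≤ m) (hmn : m ≤ n) (h5 : 5 ≤ m + n) :
    (P2 K m n).minimalPrimes =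
      {Ideal.span { p : MvPolynomial (Fin (m + n - 1)) K |
          ∃ i : ℕ, 1 ≤ i ∧ i ≤ m + n - 2 ∧ p = xv K (m + n - 1) i },
       Ideal.span { p : MvPolynomial (Fin (m + n - 1)) K |
          ∃ i : ℕ, 2 ≤ i ∧ i ≤ m + n - 1 ∧ p = xv K (m + n - 1) i }} := by
  classical
  set Q1 : Ideal (MvPolynomial (Fin (m + n - 1)) K) :=
    Ideal.span { p : MvPolynomial (Fin (m + n - 1)) K |
      ∃ i : ℕ, 1 ≤ i ∧ i ≤ m + n - 2 ∧ p = xv K (m + n - 1) i } with hQ1def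
  set Q2 : Ideal (MvPolynomial (Fin (m + n - 1)) K) :=
    Ideal.span { p : MvPolynomial (Fin (m + n - 1)) K |
      ∃ i : ℕ, 2 ≤ i ∧ i ≤ m + n - 1 ∧ p = xv K (m + n - 1) i } with hQ2def
  -- the generating sets are images of variables
  have hset1 : { p : MvPolynomial (Fin (m + n - 1)) K |
      ∃ i : ℕ, 1 ≤ i ∧ i ≤ m + n - 2 ∧ p = xv K (m + n - 1) i }
      = X '' {j : Fin (m + n - 1) | (j : ℕ) < m + n - 2} := by
    ext p
    constructor
    · rintro ⟨i, hi1, hi2, rfl⟩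
      exact ⟨⟨i - 1, by omega⟩, by simp only [Set.mem_setOf_eq]; omega,
        (xv_eq hi1 (by omega)).symm⟩
    · rintro ⟨j, hj, rfl⟩
      simp only [Set.mem_setOf_eq] at hj
      exact ⟨(j : ℕ) + 1, by omega, by omega, (xv_eq' j).symm⟩
  have hset2 : { p : MvPolynomial (Fin (m + n - 1)) K |
      ∃ i : ℕ, 2 ≤ i ∧ i ≤ m + n - 1 ∧ p = xv K (m + n - 1) i }
      = X '' {j : Fin (m + n - 1) | 1 ≤ (j : ℕ)} := by
    ext p
    constructor
    · rintro ⟨i, hi1, hi2, rfl⟩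
      exact ⟨⟨i - 1, by omega⟩, by simp only [Set.mem_setOf_eq]; omega,
        (xv_eq (by omega) hi2).symm⟩
    · rintro ⟨j, hj, rfl⟩
      simp only [Set.mem_setOf_eq] at hj
      exact ⟨(j : ℕ) + 1, by omega, by have := j.isLt; omega, (xv_eq' j).symm⟩
  have prime1 : Q1.IsPrime := by rw [hQ1def, hset1]; exact span_X_isPrime _
  have prime2 : Q2.IsPrime := by rw [hQ2def, hset2]; exact span_X_isPrime _
  -- the two non-membership facts
  have hX1 : xv K (m + n - 1) (m + n - 1) ∉ Q1 := by
    rw [hQ1def, hset1, xv_eq (by omega) le_rfl]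
    exact X_notMem_span _ _ (by simp only [Set.mem_setOf_eq]; simp; omega)
  have hX2 : xv K (m + n - 1) 1 ∉ Q2 := by
    rw [hQ2def, hset2, xv_eq le_rfl (by omega)]
    exact X_notMem_span _ _ (by simp only [Set.mem_setOf_eq]; simp)
  -- memberships of the corner variables
  have hmem1 : xv K (m + n - 1) 1 ∈ Q1 :=
    Ideal.subset_span ⟨1, le_rfl, by omega, rfl⟩
  have hmem2 : xv K (m + n - 1) (m + n - 1) ∈ Q2 :=
    Ideal.subset_span ⟨m + n - 1, by omega, le_rfl, rfl⟩
  -- P2 is contained in both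
  have hIQ1 : P2 K m n ≤ Q1 := by
    rw [P2, Ideal.span_le]
    rintro p ⟨a, b, c, d, ha, hab, hbm, hc, hcd, hdn, rfl⟩
    apply add_mem
    · exact Ideal.mul_mem_right _ _ (Ideal.subset_span ⟨a + c - 1, by omega, by omega, rfl⟩)
    · exact Ideal.mul_mem_left _ _ (Ideal.subset_span ⟨b + c - 1, by omega, by omega, rfl⟩)
  have hIQ2 : P2 K m n ≤ Q2 := by
    rw [P2, Ideal.span_le]
    rintro p ⟨a, b, c, d, ha, hab, hbm, hc, hcd, hdn, rfl⟩
    apply add_mem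
    · exact Ideal.mul_mem_left _ _ (Ideal.subset_span ⟨b + d - 1, by omega, by omega, rfl⟩)
    · exact Ideal.mul_mem_right _ _ (Ideal.subset_span ⟨a + d - 1, by omega, by omega, rfl⟩)
  -- every prime over P2 contains Q1 or Q2
  have dich : ∀ q : Ideal (MvPolynomial (Fin (m + n - 1)) K),
      q.IsPrime → P2 K m n ≤ q → Q1 ≤ q ∨ Q2 ≤ q := by
    intro q hq hIq
    have hrad : (P2 K m n).radical ≤ q := hq.isRadical.radical_le_iff.mpr hIq
    rcases hq.mem_or_mem (hrad (key3 hK hm hmn h5)) with h1 | h1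
    · left
      rw [hQ1def, Ideal.span_le]
      rintro p ⟨i, hi1, hi2, rfl⟩
      rcases Nat.eq_or_lt_of_le hi1 with h | h
      · rw [← h]; exact h1
      · exact hrad (key2 hK hm hmn h5 i h hi2)
    · right
      rw [hQ2def, Ideal.span_le]
      rintro p ⟨i, hi1, hi2, rfl⟩
      rcases Nat.eq_or_lt_of_le hi2 with h | h
      · rw [h]; exact h1
      · exact hrad (key2 hK hm hmn h5 i hi1 (by omega))
  ext p
  simp only [Set.mem_insert_iff, Set.mem_singleton_iff]
  constructor
  · intro hp
    have hp' : Minimal (fun q : Ideal (MvPolynomial (Fin (m + n - 1)) K) =>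
        q.IsPrime ∧ P2 K m n ≤ q) p := hp
    rcases dich p hp'.prop.1 hp'.prop.2 with h | h
    · exact Or.inl (le_antisymm (hp'.le_of_le ⟨prime1, hIQ1⟩ h) h)
    · exact Or.inr (le_antisymm (hp'.le_of_le ⟨prime2, hIQ2⟩ h) h)
  · rintro (rfl | rfl)
    · show Minimal (fun q : Ideal (MvPolynomial (Fin (m + n - 1)) K) =>
        q.IsPrime ∧ P2 K m n ≤ q) Q1
      refine ⟨⟨prime1, hIQ1⟩, ?_⟩
      rintro q ⟨hq, hIq⟩ hle
      rcases dich q hq hIq with h | h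
      · exact h
      · exact absurd (hle (h hmem2)) hX1
    · show Minimal (fun q : Ideal (MvPolynomial (Fin (m + n - 1)) K) =>
        q.IsPrime ∧ P2 K m n ≤ q) Q2
      refine ⟨⟨prime2, hIQ2⟩, ?_⟩
      rintro q ⟨hq, hIq⟩ hle
      rcases dich q hq hIq with h | h
      · exact absurd (hle (h hmem1)) hX2
      · exact h
end

section
/- Let M be the m×n Hankel matrix with m+n≥5 over K of characteristic ≠2, and let P be a prime ideal of R containing P_2(M) with x_1∈P. Then (x_1,…,x_{m+n-2})⊆P. -/
open MvPolynomial

lemma key_mem_s12 (K : Type*) [CommRing K] (m n : ℕ) (hm : 2 ≤ m) (hmn : m ≤ n)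
    (i : ℕ) (h2 : 2 ≤ i) (hi : i ≤ m + n - 2) :
    xv K (m + n - 1) (i - 1) * xv K (m + n - 1) (i + 1)
      + xv K (m + n - 1) i * xv K (m + n - 1) i ∈ P2 K m n := by
  apply Ideal.subset_span
  refine ⟨min (i - 1) (m - 1), min (i - 1) (m - 1) + 1,
    i - min (i - 1) (m - 1), i - min (i - 1) (m - 1) + 1,
    by omega, by omega, by omega, by omega, by omega, by omega, ?_⟩
  have e1 : min (i - 1) (m - 1) + (i - min (i - 1) (m - 1)) - 1 = i - 1 := by omega
  have e2 : min (i - 1) (m - 1) + 1 + (i - min (i - 1) (m - 1) + 1) - 1 = i + 1 := by omega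
  have e3 : min (i - 1) (m - 1) + (i - min (i - 1) (m - 1) + 1) - 1 = i := by omega
  have e4 : min (i - 1) (m - 1) + 1 + (i - min (i - 1) (m - 1)) - 1 = i := by omega
  rw [e1, e2, e3, e4]

/-- If `P` is a prime containing `P_2(M)` and `x_1 ∈ P`, then
`(x_1, …, x_{m+n-2}) ⊆ P`. -/
theorem stmt12 {K : Type*} [Field K] (hK : ringChar K ≠ 2) (m n : ℕ)
    (hm : 2 ≤ m) (hmn : m ≤ n) (h5 : 5 ≤ m + n)
    (P : Ideal (MvPolynomial (Fin (m + n - 1)) K)) (hP : P.IsPrime)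
    (hle : P2 K m n ≤ P) (hx1 : xv K (m + n - 1) 1 ∈ P) :
    Ideal.span { p : MvPolynomial (Fin (m + n - 1)) K |
      ∃ i : ℕ, 1 ≤ i ∧ i ≤ m + n - 2 ∧ p = xv K (m + n - 1) i } ≤ P := by
  have H : ∀ i : ℕ, 1 ≤ i → i ≤ m + n - 2 → xv K (m + n - 1) i ∈ P := by
    intro i
    induction i using Nat.strong_induction_on with
    | _ i ih =>
      intro h1 h2
      rcases eq_or_lt_of_le h1 with h | h
      · exact h ▸ hx1
      · have hprev : xv K (m + n - 1) (i - 1) ∈ P :=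
          ih (i - 1) (by omega) (by omega) (by omega)
        have hgen : xv K (m + n - 1) (i - 1) * xv K (m + n - 1) (i + 1)
            + xv K (m + n - 1) i * xv K (m + n - 1) i ∈ P :=
          hle (key_mem_s12 K m n hm hmn i (by omega) h2)
        have hsq : xv K (m + n - 1) i * xv K (m + n - 1) i ∈ P := by
          have heq : xv K (m + n - 1) i * xv K (m + n - 1) i =
              (xv K (m + n - 1) (i - 1) * xv K (m + n - 1) (i + 1)
                + xv K (m + n - 1) i * xv K (m + n - 1) i)
              - xv K (m + n - 1) (i - 1) * xv K (m + n - 1) (i + 1) := by ring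
          rw [heq]
          exact Ideal.sub_mem _ hgen (Ideal.mul_mem_right _ _ hprev)
        exact (hP.mem_or_mem hsq).elim id id
  rw [Ideal.span_le]
  rintro p ⟨i, h1, h2, rfl⟩
  exact H i h1 h2
end

section
/- Let M be the m×n Hankel matrix with m+n≥5 over K of characteristic ≠2, and let P be a prime ideal of R containing P_2(M) with x_1∉P. Then (x_2,…,x_{m+n-1})⊆P. -/
open MvPolynomial

/-- If `P` is a prime containing `P_2(M)` and `x_1 ∉ P`, then
`(x_2, …, x_{m+n-1}) ⊆ P`. -/
theorem stmt13 {K : Type*} [Field K] (hK : ringChar K ≠ 2) (m n : ℕ)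
    (hm : 2 ≤ m) (hmn : m ≤ n) (h5 : 5 ≤ m + n)
    (P : Ideal (MvPolynomial (Fin (m + n - 1)) K)) (hP : P.IsPrime)
    (hle : P2 K m n ≤ P) (hx1 : xv K (m + n - 1) 1 ∉ P) :
    Ideal.span { p : MvPolynomial (Fin (m + n - 1)) K |
      ∃ i : ℕ, 2 ≤ i ∧ i ≤ m + n - 1 ∧ p = xv K (m + n - 1) i } ≤ P := by
  have hn3 : 3 ≤ n := by omega
  have hgen : ∀ a b c d : ℕ, 1 ≤ a → a < b → b ≤ m → 1 ≤ c → c < d → d ≤ n →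
      xv K (m + n - 1) (a + c - 1) * xv K (m + n - 1) (b + d - 1)
        + xv K (m + n - 1) (a + d - 1) * xv K (m + n - 1) (b + c - 1) ∈ P :=
    fun a b c d h1 h2 h3 h4 h5' h6 =>
      hle (Ideal.subset_span ⟨a, b, c, d, h1, h2, h3, h4, h5', h6, rfl⟩)
  have h13 : xv K (m + n - 1) 1 * xv K (m + n - 1) 3
      + xv K (m + n - 1) 2 * xv K (m + n - 1) 2 ∈ P := by
    simpa using hgen 1 2 1 2 le_rfl one_lt_two hm le_rfl one_lt_two (by omega)
  have h14 : xv K (m + n - 1) 1 * xv K (m + n - 1) 4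
      + xv K (m + n - 1) 3 * xv K (m + n - 1) 2 ∈ P := by
    simpa using hgen 1 2 1 3 le_rfl one_lt_two hm le_rfl (by omega) hn3
  have h24 : xv K (m + n - 1) 2 * xv K (m + n - 1) 4
      + xv K (m + n - 1) 3 * xv K (m + n - 1) 3 ∈ P := by
    simpa using hgen 1 2 2 3 le_rfl one_lt_two hm one_le_two (by omega) hn3
  -- 2 ∉ P
  have h2K : (2 : K) ≠ 0 := Ring.two_ne_zero hK
  have h2P : (2 : MvPolynomial (Fin (m + n - 1)) K) ∉ P := by
    intro hmem
    have hu : IsUnit (2 : MvPolynomial (Fin (m + n - 1)) K) := by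
      have : IsUnit ((C : K →+* MvPolynomial (Fin (m + n - 1)) K) (2 : K)) :=
        (isUnit_iff_ne_zero.mpr h2K).map _
      rwa [map_ofNat] at this
    exact hP.ne_top (Ideal.eq_top_of_isUnit_mem _ hmem hu)
  -- x₃ ∈ P
  have hx3 : xv K (m + n - 1) 3 ∈ P := by
    have hcomb : (2 : MvPolynomial (Fin (m + n - 1)) K) *
        (xv K (m + n - 1) 1 * (xv K (m + n - 1) 3 * xv K (m + n - 1) 3))
        = xv K (m + n - 1) 3 * (xv K (m + n - 1) 1 * xv K (m + n - 1) 3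
            + xv K (m + n - 1) 2 * xv K (m + n - 1) 2)
          - xv K (m + n - 1) 2 * (xv K (m + n - 1) 1 * xv K (m + n - 1) 4
            + xv K (m + n - 1) 3 * xv K (m + n - 1) 2)
          + xv K (m + n - 1) 1 * (xv K (m + n - 1) 2 * xv K (m + n - 1) 4
            + xv K (m + n - 1) 3 * xv K (m + n - 1) 3) := by ring
    have hin : (2 : MvPolynomial (Fin (m + n - 1)) K) *
        (xv K (m + n - 1) 1 * (xv K (m + n - 1) 3 * xv K (m + n - 1) 3)) ∈ P := by
      rw [hcomb]
      exact P.add_mem (P.sub_mem (P.mul_mem_left _ h13) (P.mul_mem_left _ h14))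
        (P.mul_mem_left _ h24)
    rcases hP.mem_or_mem hin with h | h
    · exact absurd h h2P
    rcases hP.mem_or_mem h with h | h
    · exact absurd h hx1
    rcases hP.mem_or_mem h with h | h
    · exact h
    · exact h
  -- x₂ ∈ P
  have hx2 : xv K (m + n - 1) 2 ∈ P := by
    have hsq : xv K (m + n - 1) 2 * xv K (m + n - 1) 2 ∈ P := by
      have : xv K (m + n - 1) 2 * xv K (m + n - 1) 2
          = (xv K (m + n - 1) 1 * xv K (m + n - 1) 3
            + xv K (m + n - 1) 2 * xv K (m + n - 1) 2)
            - xv K (m + n - 1) 1 * xv K (m + n - 1) 3 := by ring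
      rw [this]
      exact P.sub_mem h13 (P.mul_mem_left _ hx3)
    rcases hP.mem_or_mem hsq with h | h <;> exact h
  -- all variables
  have hall : ∀ t, 2 ≤ t → t ≤ m + n - 1 → xv K (m + n - 1) t ∈ P := by
    intro t
    induction t using Nat.strong_induction_on with
    | _ t ih =>
      intro h2 hN
      rcases Nat.lt_or_ge t 4 with h4 | h4
      · interval_cases t
        · exact hx2
        · exact hx3
      · -- pick i0 = min m (t-1), j0 = t + 1 - i0
        set i0 := min m (t - 1) with hi0
        set j0 := t + 1 - i0 with hj0
        have hi0b : 2 ≤ i0 := by omega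
        have hi0m : i0 ≤ m := by omega
        have hi0t : i0 ≤ t - 1 := by omega
        have hj0b : 2 ≤ j0 := by omega
        have hj0n : j0 ≤ n := by omega
        have hsum : i0 + j0 - 1 = t := by omega
        have hg := hgen 1 i0 1 j0 le_rfl (by omega) hi0m le_rfl (by omega) hj0n
        have hg' : xv K (m + n - 1) 1 * xv K (m + n - 1) t
            + xv K (m + n - 1) j0 * xv K (m + n - 1) i0 ∈ P := by
          have e1 : 1 + 1 - 1 = 1 := rfl
          have e2 : i0 + j0 - 1 = t := hsum
          have e3 : 1 + j0 - 1 = j0 := by omega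
          have e4 : i0 + 1 - 1 = i0 := by omega
          rw [e1, e2, e3, e4] at hg
          exact hg
        have hi0P : xv K (m + n - 1) i0 ∈ P :=
          ih i0 (by omega) hi0b (by omega)
        have : xv K (m + n - 1) 1 * xv K (m + n - 1) t ∈ P := by
          have := P.sub_mem hg' (P.mul_mem_left (xv K (m + n - 1) j0) hi0P)
          simpa using this
        rcases hP.mem_or_mem this with h | h
        · exact absurd h hx1
        · exact h
  refine Ideal.span_le.mpr ?_
  rintro p ⟨i, h2, hN, rfl⟩
  exact hall i h2 hN
end

section
/- Set r=m+n-2≥3. The ideal Q_1=(x_1,…,x_{r-3}, x_{r-2}^2, x_{r-2}x_{r-1}, x_{r-2}x_r, x_{r-2}x_{r+1}+x_{r-1}x_r, x_{r-1}^2, x_{r-1}x_{r+1}+x_r^2) of R=K[x_1,…,x_{r+1}] is primary with radical (x_1,…,x_r). -/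
open MvPolynomial

namespace Stmt14Aux

variable (K : Type*) [Field K] (r : ℕ)

lemma xv_eq (N i : ℕ) (h1 : 1 ≤ i) (h2 : i ≤ N) :
    xv K N i = X (⟨i - 1, by omega⟩ : Fin N) := dif_pos ⟨h1, h2⟩

noncomputable def vA : MvPolynomial (Fin (r + 1)) K := X ⟨r - 3, by omega⟩
noncomputable def vB : MvPolynomial (Fin (r + 1)) K := X ⟨r - 2, by omega⟩
noncomputable def vC : MvPolynomial (Fin (r + 1)) K := X ⟨r - 1, by omega⟩
noncomputable def vD : MvPolynomial (Fin (r + 1)) K := X ⟨r, by omega⟩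

noncomputable def Qset : Set (MvPolynomial (Fin (r + 1)) K) :=
  { p : MvPolynomial (Fin (r + 1)) K |
      ∃ i : ℕ, 1 ≤ i ∧ i ≤ r - 3 ∧ p = xv K (r + 1) i } ∪
    {vA K r ^ 2, vA K r * vB K r, vA K r * vC K r,
     vA K r * vD K r + vB K r * vC K r, vB K r ^ 2,
     vB K r * vD K r + vC K r ^ 2}

noncomputable def QI : Ideal (MvPolynomial (Fin (r + 1)) K) := Ideal.span (Qset K r)

noncomputable def PI : Ideal (MvPolynomial (Fin (r + 1)) K) :=
  Ideal.span
    { p : MvPolynomial (Fin (r + 1)) K | ∃ i : ℕ, 1 ≤ i ∧ i ≤ r ∧ p = xv K (r + 1) i }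

lemma X_mem_Q {j : Fin (r + 1)} (hj : (j : ℕ) < r - 3) : X j ∈ QI K r := by
  apply Ideal.subset_span
  left
  refine ⟨(j : ℕ) + 1, by omega, by omega, ?_⟩
  rw [xv_eq K (r + 1) ((j : ℕ) + 1) (by omega) (by omega)]
  exact congrArg X (Fin.ext (by simp))

lemma gA2 : vA K r ^ 2 ∈ QI K r := Ideal.subset_span (Or.inr (by simp))
lemma gAB : vA K r * vB K r ∈ QI K r := Ideal.subset_span (Or.inr (by simp))
lemma gAC : vA K r * vC K r ∈ QI K r := Ideal.subset_span (Or.inr (by simp))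
lemma gADBC : vA K r * vD K r + vB K r * vC K r ∈ QI K r :=
  Ideal.subset_span (Or.inr (by simp))
lemma gB2 : vB K r ^ 2 ∈ QI K r := Ideal.subset_span (Or.inr (by simp))
lemma gBDC2 : vB K r * vD K r + vC K r ^ 2 ∈ QI K r :=
  Ideal.subset_span (Or.inr (by simp))

lemma X_mem_P {j : Fin (r + 1)} (hj : (j : ℕ) < r) : X j ∈ PI K r := by
  apply Ideal.subset_span
  refine ⟨(j : ℕ) + 1, by omega, by omega, ?_⟩
  rw [xv_eq K (r + 1) ((j : ℕ) + 1) (by omega) (by omega)]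
  exact congrArg X (Fin.ext (by simp))

lemma vA_mem_P (hr : 3 ≤ r) : vA K r ∈ PI K r := X_mem_P K r (by simp; omega)
lemma vB_mem_P (hr : 3 ≤ r) : vB K r ∈ PI K r := X_mem_P K r (by simp; omega)
lemma vC_mem_P (hr : 3 ≤ r) : vC K r ∈ PI K r := X_mem_P K r (by simp; omega)

lemma Q_le_P (hr : 3 ≤ r) : QI K r ≤ PI K r := by
  rw [QI, Ideal.span_le]
  rintro p (⟨i, h1, h2, rfl⟩ | h)
  · rw [xv_eq K (r + 1) i h1 (by omega)]
    exact X_mem_P K r (by simp; omega)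
  · simp only [Set.mem_insert_iff, Set.mem_singleton_iff] at h
    rcases h with rfl | rfl | rfl | rfl | rfl | rfl
    · exact Ideal.pow_mem_of_mem _ (vA_mem_P K r hr) 2 (by norm_num)
    · exact Ideal.mul_mem_right _ _ (vA_mem_P K r hr)
    · exact Ideal.mul_mem_right _ _ (vA_mem_P K r hr)
    · exact Ideal.add_mem _ (Ideal.mul_mem_right _ _ (vA_mem_P K r hr))
        (Ideal.mul_mem_right _ _ (vB_mem_P K r hr))
    · exact Ideal.pow_mem_of_mem _ (vB_mem_P K r hr) 2 (by norm_num)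
    · exact Ideal.add_mem _ (Ideal.mul_mem_right _ _ (vB_mem_P K r hr))
        (Ideal.pow_mem_of_mem _ (vC_mem_P K r hr) 2 (by norm_num))

/-! ### The evaluation to `K[X]` -/

noncomputable def eD : MvPolynomial (Fin (r + 1)) K →ₐ[K] Polynomial K :=
  aeval (fun j : Fin (r + 1) => if (j : ℕ) = r then Polynomial.X else 0)

lemma eD_vD : eD K r (vD K r) = Polynomial.X := by
  rw [eD, vD, aeval_X]; simp

lemma eD_X_small {j : Fin (r + 1)} (hj : (j : ℕ) < r) : eD K r (X j) = 0 := by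
  rw [eD, aeval_X, if_neg (by omega)]

noncomputable def PD (p : Polynomial K) : MvPolynomial (Fin (r + 1)) K :=
  Polynomial.aeval (vD K r) p

lemma eD_PD (p : Polynomial K) : eD K r (PD K r p) = p := by
  rw [PD, ← Polynomial.aeval_algHom_apply (eD K r) (vD K r) p, eD_vD]
  exact Polynomial.aeval_X_left_apply p

lemma Q_le_ker_eD (hr : 3 ≤ r) : QI K r ≤ RingHom.ker (eD K r) := by
  rw [QI, Ideal.span_le]
  rintro p (⟨i, h1, h2, rfl⟩ | h)
  · rw [xv_eq K (r + 1) i h1 (by omega), SetLike.mem_coe, RingHom.mem_ker]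
    exact eD_X_small K r (by simp; omega)
  · have hA : eD K r (vA K r) = 0 := eD_X_small K r (by simp [vA]; omega)
    have hB : eD K r (vB K r) = 0 := eD_X_small K r (by simp [vB]; omega)
    have hC : eD K r (vC K r) = 0 := eD_X_small K r (by simp [vC]; omega)
    simp only [Set.mem_insert_iff, Set.mem_singleton_iff] at h
    rcases h with rfl | rfl | rfl | rfl | rfl | rfl <;>
      simp [RingHom.mem_ker, map_add, map_mul, map_pow, hA, hB, hC]

lemma P_le_ker_eD : PI K r ≤ RingHom.ker (eD K r) := by
  rw [PI, Ideal.span_le]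
  rintro p ⟨i, h1, h2, rfl⟩
  rw [xv_eq K (r + 1) i h1 (by omega), SetLike.mem_coe, RingHom.mem_ker]
  exact eD_X_small K r (by simp; omega)

lemma normal_formP (f : MvPolynomial (Fin (r + 1)) K) :
    ∃ p : Polynomial K, f - PD K r p ∈ PI K r := by
  induction f using MvPolynomial.induction_on with
  | C a =>
      exact ⟨Polynomial.C a, by simp [PD, MvPolynomial.algebraMap_eq]⟩
  | add f g hf hg =>
      obtain ⟨p, hp⟩ := hf
      obtain ⟨q, hq⟩ := hg
      refine ⟨p + q, ?_⟩
      have h := Ideal.add_mem _ hp hq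
      have heq : f + g - PD K r (p + q) = f - PD K r p + (g - PD K r q) := by
        rw [PD, map_add]; ring_nf; rfl
      rw [heq]; exact h
  | mul_X f i hf =>
      obtain ⟨p, hp⟩ := hf
      rcases Nat.lt_or_ge (i : ℕ) r with hlt | hge
      · refine ⟨0, ?_⟩
        have heq : f * X i - PD K r 0 = (f - PD K r p) * X i + PD K r p * X i := by
          rw [PD, map_zero]; ring
        rw [heq]
        exact Ideal.add_mem _ (Ideal.mul_mem_right _ _ hp)
          (Ideal.mul_mem_left _ _ (X_mem_P K r hlt))
      · have hival : (i : ℕ) = r := by have := i.isLt; omega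
        have hi : X i = vD K r := by rw [vD]; exact congrArg X (Fin.ext hival)
        refine ⟨Polynomial.X * p, ?_⟩
        have heq : f * X i - PD K r (Polynomial.X * p)
            = (f - PD K r p) * vD K r := by
          rw [hi, PD, PD, map_mul, Polynomial.aeval_X]; ring
        rw [heq]
        exact Ideal.mul_mem_right _ _ hp

lemma ker_eD_le_P (f : MvPolynomial (Fin (r + 1)) K) (hf : eD K r f = 0) : f ∈ PI K r := by
  obtain ⟨p, hp⟩ := normal_formP K r f
  have h0 : eD K r (f - PD K r p) = 0 := P_le_ker_eD K r hp
  rw [map_sub, hf, eD_PD, zero_sub, neg_eq_zero] at h0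
  subst h0
  simpa [PD] using hp

/-! ### Normal form modulo `Q` -/

noncomputable def NF (p q s t : Polynomial K) : MvPolynomial (Fin (r + 1)) K :=
  PD K r p + PD K r q * vA K r + PD K r s * vB K r + PD K r t * vC K r

lemma normal_form (hr : 3 ≤ r) (f : MvPolynomial (Fin (r + 1)) K) :
    ∃ p q s t : Polynomial K, f - NF K r p q s t ∈ QI K r := by
  induction f using MvPolynomial.induction_on with
  | C a =>
      exact ⟨Polynomial.C a, 0, 0, 0, by
        simp [NF, PD, MvPolynomial.algebraMap_eq]⟩
  | add f g hf hg =>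
      obtain ⟨p, q, s, t, hp⟩ := hf
      obtain ⟨p', q', s', t', hq⟩ := hg
      refine ⟨p + p', q + q', s + s', t + t', ?_⟩
      have h := Ideal.add_mem _ hp hq
      have heq : f + g - NF K r (p + p') (q + q') (s + s') (t + t')
          = f - NF K r p q s t + (g - NF K r p' q' s' t') := by
        simp only [NF, PD, map_add]; ring
      rw [heq]; exact h
  | mul_X f i hf =>
      obtain ⟨p, q, s, t, hp⟩ := hf
      have hisLt := i.isLt
      rcases (by omega :
          (i : ℕ) < r - 3 ∨ (i : ℕ) = r - 3 ∨ (i : ℕ) = r - 2 ∨ (i : ℕ) = r - 1 ∨ (i : ℕ) = r)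
        with h | h | h | h | h
      · refine ⟨0, 0, 0, 0, ?_⟩
        have heq : f * X i - NF K r 0 0 0 0 = (f - NF K r p q s t) * X i
            + (NF K r p q s t) * X i := by
          simp only [NF, PD, map_zero]; ring
        rw [heq]
        exact Ideal.add_mem _ (Ideal.mul_mem_right _ _ hp)
          (Ideal.mul_mem_left _ _ (X_mem_Q K r h))
      · have hi : X i = vA K r := congrArg X (Fin.ext (by simpa using h))
        refine ⟨0, p, 0, 0, ?_⟩
        have heq : f * X i - NF K r 0 p 0 0 = (f - NF K r p q s t) * vA K r
            + PD K r q * (vA K r ^ 2) + PD K r s * (vA K r * vB K r)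
            + PD K r t * (vA K r * vC K r) := by
          rw [hi]; simp only [NF, PD, map_zero]; ring
        rw [heq]
        exact Ideal.add_mem _ (Ideal.add_mem _ (Ideal.add_mem _
            (Ideal.mul_mem_right _ _ hp)
            (Ideal.mul_mem_left _ _ (gA2 K r)))
            (Ideal.mul_mem_left _ _ (gAB K r)))
          (Ideal.mul_mem_left _ _ (gAC K r))
      · have hi : X i = vB K r := congrArg X (Fin.ext (by simpa using h))
        refine ⟨0, -(Polynomial.X * t), p, 0, ?_⟩
        have heq : f * X i - NF K r 0 (-(Polynomial.X * t)) p 0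
            = (f - NF K r p q s t) * vB K r
            + PD K r q * (vA K r * vB K r) + PD K r s * (vB K r ^ 2)
            + PD K r t * (vA K r * vD K r + vB K r * vC K r) := by
          rw [hi]; simp only [NF, PD, map_zero, map_neg, map_mul, Polynomial.aeval_X]; ring
        rw [heq]
        exact Ideal.add_mem _ (Ideal.add_mem _ (Ideal.add_mem _
            (Ideal.mul_mem_right _ _ hp)
            (Ideal.mul_mem_left _ _ (gAB K r)))
            (Ideal.mul_mem_left _ _ (gB2 K r)))
          (Ideal.mul_mem_left _ _ (gADBC K r))
      · have hi : X i = vC K r := congrArg X (Fin.ext (by simpa using h))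
        refine ⟨0, -(Polynomial.X * s), -(Polynomial.X * t), p, ?_⟩
        have heq : f * X i - NF K r 0 (-(Polynomial.X * s)) (-(Polynomial.X * t)) p
            = (f - NF K r p q s t) * vC K r
            + PD K r q * (vA K r * vC K r)
            + PD K r s * (vA K r * vD K r + vB K r * vC K r)
            + PD K r t * (vB K r * vD K r + vC K r ^ 2) := by
          rw [hi]; simp only [NF, PD, map_zero, map_neg, map_mul, Polynomial.aeval_X]; ring
        rw [heq]
        exact Ideal.add_mem _ (Ideal.add_mem _ (Ideal.add_mem _
            (Ideal.mul_mem_right _ _ hp)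
            (Ideal.mul_mem_left _ _ (gAC K r)))
            (Ideal.mul_mem_left _ _ (gADBC K r)))
          (Ideal.mul_mem_left _ _ (gBDC2 K r))
      · have hi : X i = vD K r := congrArg X (Fin.ext (by simpa using h))
        refine ⟨Polynomial.X * p, Polynomial.X * q, Polynomial.X * s, Polynomial.X * t, ?_⟩
        have heq : f * X i
            - NF K r (Polynomial.X * p) (Polynomial.X * q) (Polynomial.X * s) (Polynomial.X * t)
            = (f - NF K r p q s t) * vD K r := by
          rw [hi]; simp only [NF, PD, map_mul, Polynomial.aeval_X]; ring
        rw [heq]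
        exact Ideal.mul_mem_right _ _ hp

/-! ### The algebra `Mq = F[X]/(X^4)` over `F = K(t)` -/

noncomputable abbrev Mq := AdjoinRoot ((Polynomial.X : Polynomial (RatFunc K)) ^ 4)

noncomputable def uu : Mq K := AdjoinRoot.root _

lemma uu_pow4 : uu K ^ 4 = 0 := by
  have h1 := AdjoinRoot.aeval_eq (f := (Polynomial.X : Polynomial (RatFunc K)) ^ 4)
      ((Polynomial.X : Polynomial (RatFunc K)) ^ 4)
  rw [AdjoinRoot.mk_self] at h1
  simp only [map_pow, Polynomial.aeval_X] at h1
  exact h1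

lemma uu_pow_eq_zero (n : ℕ) (hn : 4 ≤ n) : uu K ^ n = 0 := by
  rw [← Nat.sub_add_cancel hn, pow_add, uu_pow4, mul_zero]

noncomputable def af : RatFunc K →+* Mq K := algebraMap _ _

lemma af_XinvX : af K RatFunc.X⁻¹ * af K RatFunc.X = 1 := by
  rw [← map_mul, inv_mul_cancel₀ (RatFunc.X_ne_zero), map_one]

noncomputable def vfun : Fin (r + 1) → Mq K := fun j =>
  if (j : ℕ) = r then af K RatFunc.X
  else if (j : ℕ) = r - 1 then uu K
  else if (j : ℕ) = r - 2 then -af K RatFunc.X⁻¹ * uu K ^ 2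
  else if (j : ℕ) = r - 3 then af K (RatFunc.X⁻¹ ^ 2) * uu K ^ 3
  else 0

noncomputable def phi : MvPolynomial (Fin (r + 1)) K →ₐ[K] Mq K := aeval (vfun K r)

lemma phi_vD : phi K r (vD K r) = af K RatFunc.X := by
  rw [phi, vD, aeval_X, vfun]; simp

lemma phi_vC (hr : 3 ≤ r) : phi K r (vC K r) = uu K := by
  rw [phi, vC, aeval_X, vfun]
  simp only [Fin.val_mk]
  rw [if_neg (by omega)]; simp

lemma phi_vB (hr : 3 ≤ r) : phi K r (vB K r) = -af K RatFunc.X⁻¹ * uu K ^ 2 := by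
  rw [phi, vB, aeval_X, vfun]
  simp only [Fin.val_mk]
  rw [if_neg (by omega), if_neg (by omega)]; simp

lemma phi_vA (hr : 3 ≤ r) : phi K r (vA K r) = af K (RatFunc.X⁻¹ ^ 2) * uu K ^ 3 := by
  rw [phi, vA, aeval_X, vfun]
  simp only [Fin.val_mk]
  rw [if_neg (by omega), if_neg (by omega), if_neg (by omega)]; simp

lemma phi_X_small {j : Fin (r + 1)} (hj : (j : ℕ) < r - 3) : phi K r (X j) = 0 := by
  rw [phi, aeval_X, vfun]
  rw [if_neg (by omega), if_neg (by omega), if_neg (by omega), if_neg (by omega)]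

lemma Q_le_ker_phi (hr : 3 ≤ r) : QI K r ≤ RingHom.ker (phi K r) := by
  rw [QI, Ideal.span_le]
  rintro p (⟨i, h1, h2, rfl⟩ | h)
  · rw [xv_eq K (r + 1) i h1 (by omega), SetLike.mem_coe, RingHom.mem_ker]
    exact phi_X_small K r (by simp; omega)
  · simp only [Set.mem_insert_iff, Set.mem_singleton_iff] at h
    rcases h with rfl | rfl | rfl | rfl | rfl | rfl <;>
      rw [SetLike.mem_coe, RingHom.mem_ker]
    · rw [map_pow, phi_vA K r hr,
        show (af K (RatFunc.X⁻¹ ^ 2) * uu K ^ 3) ^ 2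
          = af K (RatFunc.X⁻¹ ^ 2) ^ 2 * uu K ^ 6 from by ring,
        uu_pow_eq_zero K 6 (by norm_num), mul_zero]
    · rw [map_mul, phi_vA K r hr, phi_vB K r hr,
        show af K (RatFunc.X⁻¹ ^ 2) * uu K ^ 3 * (-af K RatFunc.X⁻¹ * uu K ^ 2)
          = -(af K (RatFunc.X⁻¹ ^ 2) * af K RatFunc.X⁻¹) * uu K ^ 5 from by ring,
        uu_pow_eq_zero K 5 (by norm_num), mul_zero]
    · rw [map_mul, phi_vA K r hr, phi_vC K r hr,
        show af K (RatFunc.X⁻¹ ^ 2) * uu K ^ 3 * uu K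
          = af K (RatFunc.X⁻¹ ^ 2) * uu K ^ 4 from by ring,
        uu_pow4, mul_zero]
    · rw [map_add, map_mul, map_mul, phi_vA K r hr, phi_vB K r hr, phi_vC K r hr, phi_vD K r,
        show af K (RatFunc.X⁻¹ ^ 2) * uu K ^ 3 * af K RatFunc.X
            + -af K RatFunc.X⁻¹ * uu K ^ 2 * uu K
          = (af K RatFunc.X⁻¹ * (af K RatFunc.X⁻¹ * af K RatFunc.X)
              - af K RatFunc.X⁻¹) * uu K ^ 3 from by rw [map_pow]; ring,
        af_XinvX, mul_one, sub_self, zero_mul]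
    · rw [map_pow, phi_vB K r hr,
        show (-af K RatFunc.X⁻¹ * uu K ^ 2) ^ 2 = af K RatFunc.X⁻¹ ^ 2 * uu K ^ 4 from by ring,
        uu_pow4, mul_zero]
    · rw [map_add, map_mul, map_pow, phi_vB K r hr, phi_vC K r hr, phi_vD K r,
        show -af K RatFunc.X⁻¹ * uu K ^ 2 * af K RatFunc.X + uu K ^ 2
          = (1 - af K RatFunc.X⁻¹ * af K RatFunc.X) * uu K ^ 2 from by ring,
        af_XinvX, sub_self, zero_mul]

/-! ### Injectivity of the normal form -/

lemma algebraMap_aeval (e : RatFunc K) (p : Polynomial K) :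
    Polynomial.aeval (af K e) p = af K (Polynomial.aeval e p) := by
  have h := Polynomial.aeval_algHom_apply
    (IsScalarTower.toAlgHom K (RatFunc K) (Mq K)) e p
  simpa [af, IsScalarTower.coe_toAlgHom'] using h

lemma phi_PD (p : Polynomial K) :
    phi K r (PD K r p) = af K (Polynomial.aeval (RatFunc.X : RatFunc K) p) := by
  rw [PD, ← Polynomial.aeval_algHom_apply (phi K r) (vD K r) p, phi_vD]
  exact algebraMap_aeval K RatFunc.X p

lemma aevalX_inj {p : Polynomial K}
    (h : Polynomial.aeval (RatFunc.X : RatFunc K) p = 0) : p = 0 := by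
  have h2 : (Polynomial.aeval (RatFunc.X : RatFunc K) : Polynomial K →ₐ[K] RatFunc K)
      = IsScalarTower.toAlgHom K (Polynomial K) (RatFunc K) := by
    apply Polynomial.algHom_ext
    simp [RatFunc.algebraMap_X]
  rw [h2] at h
  exact RatFunc.algebraMap_injective K (by simpa using h)

lemma NF_inj (hr : 3 ≤ r) {p q s t : Polynomial K}
    (h : phi K r (NF K r p q s t) = 0) : p = 0 ∧ q = 0 ∧ s = 0 ∧ t = 0 := by
  set pe := Polynomial.aeval (RatFunc.X : RatFunc K) p with hpe
  set qe := Polynomial.aeval (RatFunc.X : RatFunc K) q with hqe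
  set se := Polynomial.aeval (RatFunc.X : RatFunc K) s with hse
  set te := Polynomial.aeval (RatFunc.X : RatFunc K) t with hte
  have hNF : phi K r (NF K r p q s t)
      = AdjoinRoot.mk ((Polynomial.X : Polynomial (RatFunc K)) ^ 4)
        (Polynomial.C pe + Polynomial.C (qe * RatFunc.X⁻¹ ^ 2) * Polynomial.X ^ 3
          + Polynomial.C (se * -RatFunc.X⁻¹) * Polynomial.X ^ 2
          + Polynomial.C te * Polynomial.X) := by
    rw [NF, map_add, map_add, map_add, map_mul, map_mul, map_mul,
      phi_PD, phi_PD, phi_PD, phi_PD, phi_vA K r hr, phi_vB K r hr, phi_vC K r hr]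
    simp only [map_add, map_mul, map_neg, map_pow, AdjoinRoot.mk_C, AdjoinRoot.mk_X,
      af, uu, AdjoinRoot.algebraMap_eq]
    ring
  rw [hNF, AdjoinRoot.mk_eq_zero] at h
  obtain ⟨g, hg⟩ := h
  have hco : ∀ k, k < 4 → (Polynomial.C pe
      + Polynomial.C (qe * RatFunc.X⁻¹ ^ 2) * Polynomial.X ^ 3
      + Polynomial.C (se * -RatFunc.X⁻¹) * Polynomial.X ^ 2
      + Polynomial.C te * Polynomial.X).coeff k = 0 := by
    intro k hk
    rw [hg, mul_comm, Polynomial.coeff_mul_X_pow', if_neg (by omega)]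
  have h0 := hco 0 (by norm_num)
  have h1 := hco 1 (by norm_num)
  have h2 := hco 2 (by norm_num)
  have h3 := hco 3 (by norm_num)
  simp [Polynomial.coeff_add, Polynomial.coeff_C_mul, Polynomial.coeff_mul_X_pow',
    Polynomial.coeff_C, Polynomial.coeff_X] at h0 h1 h2 h3
  have hXne : (RatFunc.X : RatFunc K) ≠ 0 := RatFunc.X_ne_zero
  refine ⟨aevalX_inj K (by rw [← hpe, h0]),
    aevalX_inj K (by rw [← hqe, h3.resolve_right hXne]),
    aevalX_inj K (by rw [← hse, h2.resolve_right hXne]),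
    aevalX_inj K (by rw [← hte, h1])⟩

lemma c4_mem : vC K r ^ 4 ∈ QI K r := by
  have heq : vC K r ^ 4 = vC K r ^ 2 * (vB K r * vD K r + vC K r ^ 2)
      - vD K r * vC K r * (vA K r * vD K r + vB K r * vC K r)
      + vD K r ^ 2 * (vA K r * vC K r) := by ring
  rw [heq]
  exact Ideal.add_mem _ (Ideal.sub_mem _ (Ideal.mul_mem_left _ _ (gBDC2 K r))
    (Ideal.mul_mem_left _ _ (gADBC K r))) (Ideal.mul_mem_left _ _ (gAC K r))

lemma rad_eq (hr : 3 ≤ r) : (QI K r).radical = PI K r := by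
  apply le_antisymm
  · intro f hf
    obtain ⟨n, hn⟩ := hf
    have h0 : eD K r f ^ n = 0 := by
      rw [← map_pow]
      exact RingHom.mem_ker.mp (Q_le_ker_eD K r hr hn)
    rcases Nat.eq_zero_or_pos n with rfl | hn0
    · rw [pow_zero] at h0
      exact absurd h0 one_ne_zero
    · exact ker_eD_le_P K r f ((pow_eq_zero_iff (by omega)).mp h0)
  · rw [PI, Ideal.span_le]
    rintro pp ⟨i, h1, h2, rfl⟩
    rw [xv_eq K (r + 1) i h1 (by omega), SetLike.mem_coe]
    rcases (by omega : i ≤ r - 3 ∨ i = r - 2 ∨ i = r - 1 ∨ i = r) with h | h | h | h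
    · exact Ideal.le_radical (X_mem_Q K r (by simp; omega))
    · have hx : (X (⟨i - 1, by omega⟩ : Fin (r + 1)) : MvPolynomial (Fin (r + 1)) K)
          = vA K r := congrArg X (Fin.ext (by simp; omega))
      rw [hx]
      exact Ideal.mem_radical_of_pow_mem (Ideal.le_radical (gA2 K r))
    · have hx : (X (⟨i - 1, by omega⟩ : Fin (r + 1)) : MvPolynomial (Fin (r + 1)) K)
          = vB K r := congrArg X (Fin.ext (by simp; omega))
      rw [hx]
      exact Ideal.mem_radical_of_pow_mem (Ideal.le_radical (gB2 K r))
    · have hx : (X (⟨i - 1, by omega⟩ : Fin (r + 1)) : MvPolynomial (Fin (r + 1)) K)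
          = vC K r := congrArg X (Fin.ext (by simp; omega))
      rw [hx]
      exact Ideal.mem_radical_of_pow_mem (m := 4) (Ideal.le_radical (c4_mem K r))

lemma primary (hr : 3 ≤ r) : (QI K r).IsPrimary := by
  rw [Ideal.isPrimary_iff]
  constructor
  · intro htop
    have h1 : (1 : MvPolynomial (Fin (r + 1)) K) ∈ QI K r := htop ▸ Submodule.mem_top
    have h2 := RingHom.mem_ker.mp (Q_le_ker_eD K r hr h1)
    rw [map_one] at h2
    exact one_ne_zero h2
  · intro x y hxy
    by_cases hy : y ∈ PI K r
    · right; rw [rad_eq K r hr]; exact hy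
    · left
      obtain ⟨p, q, s, t, hb⟩ := normal_form K r hr y
      have hPD0 : PD K r (0 : Polynomial K) = 0 := by simp [PD]
      have hpne : p ≠ 0 := by
        intro hp0
        apply hy
        have h1 : y - NF K r p q s t ∈ PI K r := Q_le_P K r hr hb
        have h2 : NF K r p q s t ∈ PI K r := by
          rw [NF, hp0, hPD0, zero_add]
          exact Ideal.add_mem _ (Ideal.add_mem _
            (Ideal.mul_mem_left _ _ (vA_mem_P K r hr))
            (Ideal.mul_mem_left _ _ (vB_mem_P K r hr)))
            (Ideal.mul_mem_left _ _ (vC_mem_P K r hr))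
        simpa using Ideal.add_mem _ h1 h2
      have hw : ∃ w : Mq K, phi K r y
          = af K (Polynomial.aeval (RatFunc.X : RatFunc K) p) + uu K * w := by
        refine ⟨af K (Polynomial.aeval (RatFunc.X : RatFunc K) q)
            * af K (RatFunc.X⁻¹ ^ 2) * uu K ^ 2
            - af K (Polynomial.aeval (RatFunc.X : RatFunc K) s) * af K RatFunc.X⁻¹ * uu K
            + af K (Polynomial.aeval (RatFunc.X : RatFunc K) t), ?_⟩
        have h0 := RingHom.mem_ker.mp (Q_le_ker_phi K r hr hb)
        rw [map_sub, sub_eq_zero] at h0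
        rw [h0, NF, map_add, map_add, map_add, map_mul, map_mul, map_mul,
          phi_PD, phi_PD, phi_PD, phi_PD, phi_vA K r hr, phi_vB K r hr, phi_vC K r hr]
        ring
      obtain ⟨w, hphiy⟩ := hw
      have hunit : IsUnit (phi K r y) := by
        rw [hphiy]
        have hnil : IsNilpotent (uu K * w) := ⟨4, by rw [mul_pow, uu_pow4, zero_mul]⟩
        have hu : IsUnit (af K (Polynomial.aeval (RatFunc.X : RatFunc K) p)) :=
          IsUnit.map (af K) (isUnit_iff_ne_zero.mpr (fun h0 => hpne (aevalX_inj K h0)))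
        rw [add_comm]
        exact hnil.isUnit_add_right_of_commute hu (Commute.all _ _)
      have h0 : phi K r x * phi K r y = 0 := by
        rw [← map_mul]
        exact RingHom.mem_ker.mp (Q_le_ker_phi K r hr hxy)
      have hx0 : phi K r x = 0 := (IsUnit.mul_left_eq_zero hunit).mp h0
      obtain ⟨p', q', s', t', hx⟩ := normal_form K r hr x
      have hphiNF : phi K r (NF K r p' q' s' t') = 0 := by
        have h1 := RingHom.mem_ker.mp (Q_le_ker_phi K r hr hx)
        rw [map_sub, hx0, zero_sub, neg_eq_zero] at h1
        exact h1
      obtain ⟨hp', hq', hs', ht'⟩ := NF_inj K r hr hphiNF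
      subst hp' hq' hs' ht'
      have hNF0 : NF K r 0 0 0 0 = 0 := by simp [NF, PD]
      rw [hNF0, sub_zero] at hx
      exact hx

end Stmt14Aux

open Stmt14Aux in
/-- The ideal `Q_1` is primary, with radical `(x_1, …, x_r)`. -/
theorem stmt14 {K : Type*} [Field K] (hK : ringChar K ≠ 2) (r : ℕ) (hr : 3 ≤ r) :
    (Ideal.span
      ({ p : MvPolynomial (Fin (r + 1)) K |
          ∃ i : ℕ, 1 ≤ i ∧ i ≤ r - 3 ∧ p = xv K (r + 1) i } ∪
        {xv K (r + 1) (r - 2) ^ 2,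
         xv K (r + 1) (r - 2) * xv K (r + 1) (r - 1),
         xv K (r + 1) (r - 2) * xv K (r + 1) r,
         xv K (r + 1) (r - 2) * xv K (r + 1) (r + 1)
           + xv K (r + 1) (r - 1) * xv K (r + 1) r,
         xv K (r + 1) (r - 1) ^ 2,
         xv K (r + 1) (r - 1) * xv K (r + 1) (r + 1) + xv K (r + 1) r ^ 2})).IsPrimary
    ∧ (Ideal.span
      ({ p : MvPolynomial (Fin (r + 1)) K |
          ∃ i : ℕ, 1 ≤ i ∧ i ≤ r - 3 ∧ p = xv K (r + 1) i } ∪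
        {xv K (r + 1) (r - 2) ^ 2,
         xv K (r + 1) (r - 2) * xv K (r + 1) (r - 1),
         xv K (r + 1) (r - 2) * xv K (r + 1) r,
         xv K (r + 1) (r - 2) * xv K (r + 1) (r + 1)
           + xv K (r + 1) (r - 1) * xv K (r + 1) r,
         xv K (r + 1) (r - 1) ^ 2,
         xv K (r + 1) (r - 1) * xv K (r + 1) (r + 1) + xv K (r + 1) r ^ 2})).radical
      = Ideal.span { p : MvPolynomial (Fin (r + 1)) K |
          ∃ i : ℕ, 1 ≤ i ∧ i ≤ r ∧ p = xv K (r + 1) i } := by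
  have hA : xv K (r + 1) (r - 2) = vA K r := by
    rw [xv_eq K (r + 1) (r - 2) (by omega) (by omega), vA]
    exact congrArg X (Fin.ext (by simp; omega))
  have hB : xv K (r + 1) (r - 1) = vB K r := by
    rw [xv_eq K (r + 1) (r - 1) (by omega) (by omega), vB]
    exact congrArg X (Fin.ext (by simp; omega))
  have hC : xv K (r + 1) r = vC K r := by
    rw [xv_eq K (r + 1) r (by omega) (by omega), vC]
  have hD : xv K (r + 1) (r + 1) = vD K r := by
    rw [xv_eq K (r + 1) (r + 1) (by omega) (by omega), vD]
    exact congrArg X (Fin.ext (by simp))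
  rw [hA, hB, hC, hD]
  exact ⟨primary K r hr, rad_eq K r hr⟩
end

section
/- Let M be the m×n Hankel matrix with m+n≥5 over K of characteristic ≠2, and set r=m+n-2. The ideal J=P_2(M)+(x_1^2, x_{r+1}^2) is primary to the maximal ideal (x_1,…,x_{r+1}); in particular √J=(x_1,…,x_{r+1}). -/
open MvPolynomial

section aux

variable {K : Type*} [Field K] {N : ℕ}

/-- The variable-span ideal is the kernel of `constantCoeff`. -/
lemma span_vars_eq_ker :
    Ideal.span { p : MvPolynomial (Fin N) K | ∃ i : ℕ, 1 ≤ i ∧ i ≤ N ∧ p = xv K N i } =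
      RingHom.ker (constantCoeff (σ := Fin N) (R := K)) := by
  have hset : { p : MvPolynomial (Fin N) K | ∃ i : ℕ, 1 ≤ i ∧ i ≤ N ∧ p = xv K N i } =
      X '' (Set.univ : Set (Fin N)) := by
    ext p
    constructor
    · rintro ⟨i, h1, h2, rfl⟩
      exact ⟨⟨i - 1, by omega⟩, trivial, by simp [xv, h1, h2]⟩
    · rintro ⟨j, -, rfl⟩
      exact ⟨j + 1, by omega, by omega, by simp [xv, Nat.lt_iff_add_one_le.mp j.isLt]⟩
  ext p
  rw [hset, mem_ideal_span_X_image, RingHom.mem_ker]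
  have hcc : constantCoeff p = coeff 0 p := rfl
  rw [hcc]
  constructor
  · intro h
    by_contra hc
    obtain ⟨i, -, hi⟩ := h 0 (mem_support_iff.mpr hc)
    simp at hi
  · intro h m hm
    have : m ≠ 0 := fun h0 => (mem_support_iff.mp hm) (h0 ▸ h)
    obtain ⟨i, hi⟩ := Finsupp.ne_iff.mp this
    exact ⟨i, trivial, by simpa using hi⟩

lemma span_vars_isMaximal :
    (Ideal.span { p : MvPolynomial (Fin N) K | ∃ i : ℕ, 1 ≤ i ∧ i ≤ N ∧ p = xv K N i }).IsMaximal := by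
  rw [span_vars_eq_ker]
  exact RingHom.ker_isMaximal_of_surjective _ (fun k => ⟨C k, by simp⟩)

lemma xv_mem_span_vars (i : ℕ) :
    xv K N i ∈ Ideal.span { p : MvPolynomial (Fin N) K | ∃ j : ℕ, 1 ≤ j ∧ j ≤ N ∧ p = xv K N j } := by
  by_cases h : 1 ≤ i ∧ i ≤ N
  · exact Ideal.subset_span ⟨i, h.1, h.2, rfl⟩
  · simp [xv, h]

end aux


/-- The ideal `J = P_2(M) + (x_1^2, x_{r+1}^2)` (with `r = m+n-2`) is primary to the
maximal ideal `(x_1, …, x_{r+1})`. -/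
theorem stmt15 {K : Type*} [Field K] (hK : ringChar K ≠ 2) (m n : ℕ)
    (hm : 2 ≤ m) (hmn : m ≤ n) (h5 : 5 ≤ m + n) :
    (P2 K m n + Ideal.span {xv K (m + n - 1) 1 ^ 2,
        xv K (m + n - 1) (m + n - 1) ^ 2}).IsPrimary ∧
    (P2 K m n + Ideal.span {xv K (m + n - 1) 1 ^ 2,
        xv K (m + n - 1) (m + n - 1) ^ 2}).radical =
      Ideal.span { p : MvPolynomial (Fin (m + n - 1)) K |
        ∃ i : ℕ, 1 ≤ i ∧ i ≤ m + n - 1 ∧ p = xv K (m + n - 1) i } := by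
  set N := m + n - 1 with hN
  set J := P2 K m n + Ideal.span {xv K N 1 ^ 2, xv K N N ^ 2} with hJ
  set 𝔪 := Ideal.span { p : MvPolynomial (Fin N) K |
      ∃ i : ℕ, 1 ≤ i ∧ i ≤ N ∧ p = xv K N i } with h𝔪
  have hn : 2 ≤ n := le_trans hm hmn
  -- J ⊆ 𝔪
  have hJ𝔪 : J ≤ 𝔪 := by
    rw [hJ]
    apply sup_le
    · rw [P2, Ideal.span_le]
      rintro p ⟨a, b, c, d, h1, h2, h3, h4, h5', h6, rfl⟩
      exact add_mem (Ideal.mul_mem_right _ _ (xv_mem_span_vars _))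
        (Ideal.mul_mem_right _ _ (xv_mem_span_vars _))
    · rw [Ideal.span_le]
      rintro p (rfl | rfl) <;>
        exact Ideal.pow_mem_of_mem _ (xv_mem_span_vars _) 2 (by norm_num)
  -- squared endpoints in J
  have hx1 : xv K N 1 ^ 2 ∈ J :=
    Ideal.mem_sup_right (Ideal.subset_span (Or.inl rfl))
  have hxN : xv K N N ^ 2 ∈ J :=
    Ideal.mem_sup_right (Ideal.subset_span (Or.inr rfl))
  -- generators giving x_i^2 + x_{i-1} x_{i+1}
  have hgen : ∀ i : ℕ, 2 ≤ i → i ≤ N - 1 →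
      xv K N (i - 1) * xv K N (i + 1) + xv K N i * xv K N i ∈ P2 K m n := by
    intro i h2 hNi
    set a := min (i - 1) (m - 1) with ha
    set c := i - a with hc
    have hrange : 1 ≤ a ∧ a + 1 ≤ m ∧ 1 ≤ c ∧ c + 1 ≤ n := by omega
    have : xv K N (a + c - 1) * xv K N ((a+1) + (c+1) - 1)
        + xv K N (a + (c+1) - 1) * xv K N ((a+1) + c - 1) ∈ P2 K m n :=
      Ideal.subset_span ⟨a, a+1, c, c+1, hrange.1, Nat.lt_succ_self a, hrange.2.1,
        hrange.2.2.1, Nat.lt_succ_self c, hrange.2.2.2, rfl⟩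
    have e1 : a + c - 1 = i - 1 := by omega
    have e2 : (a+1) + (c+1) - 1 = i + 1 := by omega
    have e3 : a + (c+1) - 1 = i := by omega
    have e4 : (a+1) + c - 1 = i := by omega
    rwa [e1, e2, e3, e4] at this
  -- all variables in radical
  have hrad : ∀ i : ℕ, 1 ≤ i → i ≤ N - 1 → xv K N i ∈ J.radical := by
    intro i
    induction i with
    | zero => omega
    | succ k ih =>
      intro h1 h2
      rcases Nat.lt_or_ge k 1 with hk | hk
      · -- k+1 = 1
        have : k = 0 := by omega
        subst this
        exact Ideal.mem_radical_of_pow_mem (m := 2) (Ideal.le_radical hx1)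
      · have hprev : xv K N k ∈ J.radical := ih hk (by omega)
        have hg : xv K N k * xv K N (k + 2) + xv K N (k+1) * xv K N (k+1) ∈ J.radical := by
          apply Ideal.le_radical
          apply Ideal.mem_sup_left
          have := hgen (k+1) (by omega) h2
          simpa using this
        have hmul : xv K N k * xv K N (k + 2) ∈ J.radical :=
          Ideal.mul_mem_right _ _ hprev
        have hsq : xv K N (k+1) * xv K N (k+1) ∈ J.radical := by
          have := sub_mem hg hmul
          simpa using this
        exact Ideal.mem_radical_of_pow_mem (m := 2) (by rwa [pow_two])
  have hradN : xv K N N ∈ J.radical :=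
    Ideal.mem_radical_of_pow_mem (m := 2) (Ideal.le_radical hxN)
  -- radical J = 𝔪
  have hradeq : J.radical = 𝔪 := by
    apply le_antisymm
    · have : 𝔪.IsMaximal := span_vars_isMaximal
      calc J.radical ≤ 𝔪.radical := Ideal.radical_mono hJ𝔪
        _ = 𝔪 := (this.isPrime.radical)
    · rw [h𝔪, Ideal.span_le]
      rintro p ⟨i, h1, h2, rfl⟩
      rcases Nat.lt_or_ge i N with hi | hi
      · exact hrad i h1 (by omega)
      · have : i = N := by omega
        subst this; exact hradN
  refine ⟨?_, hradeq⟩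
  apply Ideal.isPrimary_of_isMaximal_radical
  rw [hradeq]
  exact span_vars_isMaximal
end

section
/- Let M be the m×n Hankel matrix over K of characteristic ≠2, with m=2 and n≥4. Then the maximal ideal (x_1,…,x_{n+1}) is an associated prime of P_2(M): for any 2≤i<j with i≤n-2, 4≤j≤n and i<j, the element α=x_i x_j satisfies α∉P_2(M) and (x_1,…,x_{n+1})·α⊆P_2(M). -/
/-!
Write `g(c, d) = x_c x_{d+1} + x_d x_{c+1}` for the subpermanent on columns `c, d`. For all
indices one has
`2 x_a x_b x_{c+1} = x_a g(b, c) + x_b g(a, c) - x_c g(a, b)` and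
`2 x_{a+1} x_b x_{c+1} = x_{a+1} g(b, c) + x_{c+1} g(a, b) - x_{b+1} g(a, c)`,
so once `2` is invertible such a cubic monomial lies in `P₂(M)` as soon as `a, b, c` are distinct
columns, and a case check puts every `x_k x_i x_j` in one of these two shapes.
No quadratic monomial lies in `P₂(M)`: the functional `p ↦ ∑_{u ≤ s/2} (-1)^u [x_u x_{s-u}] p`
only reads degree-2 coefficients and kills every `g(c, d)` (its two monomials have consecutive
`u`), but is `±1` on `x_i x_j` for `s = i + j`. Hence `(P₂(M) : α)` is a proper ideal containing
the maximal ideal `(x_1, …, x_{n+1})`, so it equals it.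
-/

open MvPolynomial

namespace MvPolynomial

variable {σ R : Type*} [CommRing R]

theorem coeff_mul_of_isHomogeneous {d : ℕ} {g : MvPolynomial σ R} (hg : g.IsHomogeneous d)
    (r : MvPolynomial σ R) {e : σ →₀ ℕ} (he : e.degree = d) :
    coeff e (r * g) = coeff 0 r * coeff e g := by
  classical
  rw [coeff_mul, Finset.sum_eq_single (0, e)]
  · rintro ⟨a, b⟩ hab hne
    simp only [Finset.HasAntidiagonal.mem_antidiagonal] at hab
    have ha : a ≠ 0 := by rintro rfl; simp_all
    have hb : b.degree ≠ d := by
      rw [← he, ← hab, map_add]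
      have := (Finsupp.degree_eq_zero_iff a).not.2 ha
      omega
    rw [hg.coeff_eq_zero hb, mul_zero]
  · simp

theorem sum_mul_coeff_eq_zero_of_mem_span {ι : Type*} (U : Finset ι) (c : ι → R)
    (e : ι → σ →₀ ℕ) {d : ℕ} (he : ∀ u ∈ U, (e u).degree = d) {S : Set (MvPolynomial σ R)}
    (hS : ∀ g ∈ S, g.IsHomogeneous d ∧ ∑ u ∈ U, c u * coeff (e u) g = 0)
    {p : MvPolynomial σ R} (hp : p ∈ Ideal.span S) : ∑ u ∈ U, c u * coeff (e u) p = 0 := by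
  suffices ∀ r, ∑ u ∈ U, c u * coeff (e u) (r * p) = 0 by simpa using this 1
  induction hp using Submodule.span_induction with
  | mem g hg =>
    intro r
    rw [Finset.sum_congr rfl fun u hu => by
      rw [coeff_mul_of_isHomogeneous (hS g hg).1 r (he u hu), mul_left_comm],
      ← Finset.mul_sum, (hS g hg).2, mul_zero]
  | zero => simp
  | add p q _ _ hp hq => intro r; simp [mul_add, Finset.sum_add_distrib, hp r, hq r]
  | smul a p _ hp => intro r; simpa [mul_assoc] using hp (r * a)

theorem mem_of_two_mul_mem {K : Type*} [Field K] (hK : ringChar K ≠ 2)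
    {I : Ideal (MvPolynomial σ K)} {p : MvPolynomial σ K} (h : 2 * p ∈ I) : p ∈ I :=
  (I.unit_mul_mem_iff_mem ((Ring.two_ne_zero hK).isUnit.map C)).1 (by rwa [map_ofNat])

theorem isMaximal_idealOfVars {K : Type*} [Field K] : (idealOfVars σ K).IsMaximal := by
  have : idealOfVars σ K = RingHom.ker (constantCoeff (σ := σ) (R := K)) := by
    ext p
    rw [RingHom.mem_ker, ← pow_one (idealOfVars σ K), mem_pow_idealOfVars_iff',
      constantCoeff_eq]
    refine ⟨fun h => h 0 (by simp), fun h e he => ?_⟩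
    rwa [(Finsupp.degree_eq_zero_iff e).1 (by omega)]
  rw [this]
  exact RingHom.ker_isMaximal_of_surjective _ fun a => ⟨C a, constantCoeff_C _ _⟩

theorem colon_span_singleton_eq_idealOfVars {K : Type*} [Field K]
    {I : Ideal (MvPolynomial σ K)} {α : MvPolynomial σ K} (hα : α ∉ I)
    (hX : ∀ a, X a * α ∈ I) : I.colon (Ideal.span {α}) = idealOfVars σ K := by
  refine (isMaximal_idealOfVars.eq_of_le ?_ ?_).symm
  · intro h
    have := (h ▸ Submodule.mem_top : (1 : MvPolynomial σ K) ∈ I.colon (Ideal.span {α}))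
    exact hα (by simpa using Submodule.mem_colon_span_singleton.1 this)
  · rw [Ideal.span_le, Set.range_subset_iff]
    exact fun a => Submodule.mem_colon_span_singleton.2 (hX a)

end MvPolynomial

namespace HankelPermanent

variable {K : Type*} {n : ℕ}

section CommRing

variable [CommRing K]

local notation "x" => xv K (2 + n - 1)

theorem rename_xv {N i : ℕ} (hi : 1 ≤ i) (hi' : i ≤ N) :
    rename (fun a : Fin N => (a : ℕ) + 1) (xv K N i) = X i := by
  rw [xv, dif_pos ⟨hi, hi'⟩, rename_X]
  congr 1
  exact Nat.sub_add_cancel hi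

theorem xv_val_add_one {N : ℕ} (a : Fin N) : xv K N (a + 1) = X a := by
  rw [xv, dif_pos ⟨by omega, by omega⟩]
  rfl

theorem setOf_xv_eq_range_X :
    {p | ∃ k, 1 ≤ k ∧ k ≤ n + 1 ∧ p = x k} = Set.range (X : Fin (2 + n - 1) → _) := by
  ext p
  constructor
  · rintro ⟨k, hk, hk', rfl⟩
    exact ⟨⟨k - 1, by omega⟩, by rw [xv, dif_pos ⟨hk, by omega⟩]⟩
  · rintro ⟨a, rfl⟩
    exact ⟨a + 1, by omega, by omega, (xv_val_add_one a).symm⟩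

noncomputable def altCoeff (K : Type*) [CommRing K] (s : ℕ) (p : MvPolynomial ℕ K) : K :=
  ∑ u ∈ Finset.range (s / 2 + 1),
    (-1) ^ u * coeff (Finsupp.single u 1 + Finsupp.single (s - u) 1) p

theorem altCoeff_X_mul_X (s : ℕ) {a b : ℕ} (hab : a ≤ b) :
    altCoeff K s (X a * X b) = if a + b = s then (-1) ^ a else 0 := by
  classical
  have key : ∀ u ∈ Finset.range (s / 2 + 1),
      (Finsupp.single a 1 + Finsupp.single b 1 = Finsupp.single u 1 + Finsupp.single (s - u) 1)
        ↔ (a + b = s ∧ a = u) := by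
    intro u hu
    rw [Finset.mem_range] at hu
    rw [Finsupp.single_add_single_eq_single_add_single one_ne_zero one_ne_zero]
    omega
  rw [altCoeff, X, X, monomial_mul, one_mul]
  simp_rw [coeff_monomial]
  rw [Finset.sum_congr rfl fun u hu => by rw [if_congr (key u hu) rfl rfl, ite_and]]
  by_cases h : a + b = s
  · simp only [h, if_true, mul_ite, mul_one, mul_zero, Finset.sum_ite_eq, Finset.mem_range]
    rw [if_pos (by omega)]
  · simp [h]

theorem altCoeff_add (s : ℕ) (p q : MvPolynomial ℕ K) :
    altCoeff K s (p + q) = altCoeff K s p + altCoeff K s q := by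
  simp only [altCoeff, coeff_add, mul_add, Finset.sum_add_distrib]

theorem altCoeff_eq_zero_of_mem_span {s : ℕ} {S : Set (MvPolynomial ℕ K)}
    (hS : ∀ g ∈ S, g.IsHomogeneous 2 ∧ altCoeff K s g = 0) {p : MvPolynomial ℕ K}
    (hp : p ∈ Ideal.span S) : altCoeff K s p = 0 :=
  sum_mul_coeff_eq_zero_of_mem_span _ _ _ (fun _ _ => by simp) hS hp

theorem altCoeff_X_mul_X_add_X_mul_X (s : ℕ) {c d : ℕ} (hcd : c < d) :
    altCoeff K s (X c * X (d + 1) + X d * X (c + 1)) = 0 := by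
  rw [altCoeff_add, altCoeff_X_mul_X s (by omega), mul_comm (X d),
    altCoeff_X_mul_X s (by omega), show c + 1 + d = c + (d + 1) by ring]
  split_ifs
  · rw [pow_succ, mul_neg_one, add_neg_cancel]
  · rw [add_zero]

noncomputable def hankelPerm (K : Type*) [CommRing K] (n c d : ℕ) :
    MvPolynomial (Fin (2 + n - 1)) K :=
  xv K (2 + n - 1) c * xv K (2 + n - 1) (d + 1)
    + xv K (2 + n - 1) d * xv K (2 + n - 1) (c + 1)

theorem P2_two_eq_span :
    P2 K 2 n = Ideal.span {p | ∃ c d, 1 ≤ c ∧ c < d ∧ d ≤ n ∧ p = hankelPerm K n c d} := by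
  have hgen (c d : ℕ) : x (1 + c - 1) * x (2 + d - 1) + x (1 + d - 1) * x (2 + c - 1) =
      hankelPerm K n c d := by
    rw [hankelPerm, show 1 + c - 1 = c by omega, show 2 + d - 1 = d + 1 by omega,
      show 1 + d - 1 = d by omega, show 2 + c - 1 = c + 1 by omega]
  rw [P2]
  congr 1
  ext p
  constructor
  · rintro ⟨a, b, c, d, ha, hab, hb, hc, hcd, hd, rfl⟩
    obtain ⟨rfl, rfl⟩ : a = 1 ∧ b = 2 := by omega
    exact ⟨c, d, hc, hcd, hd, hgen c d⟩
  · rintro ⟨c, d, hc, hcd, hd, rfl⟩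
    exact ⟨1, 2, c, d, le_rfl, one_lt_two, le_rfl, hc, hcd, hd, (hgen c d).symm⟩

theorem xv_mul_xv_notMem_P2 [Nontrivial K] {i j : ℕ} (hi : 1 ≤ i) (hj : 1 ≤ j)
    (hi' : i ≤ n + 1) (hj' : j ≤ n + 1) : x i * x j ∉ P2 K 2 n := by
  wlog hij : i ≤ j generalizing i j
  · rw [mul_comm]
    exact this hj hi hj' hi' (by omega)
  intro h
  -- Transport to `MvPolynomial ℕ K` (`x_i ↦ X i`), where `u` and `s - u` need no range checks.
  have hρ := Ideal.mem_map_of_mem (rename fun a : Fin (2 + n - 1) => (a : ℕ) + 1) h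
  rw [P2_two_eq_span, Ideal.map_span] at hρ
  have := altCoeff_eq_zero_of_mem_span (s := i + j) ?_ hρ
  · rw [map_mul, rename_xv hi (by omega), rename_xv hj (by omega), altCoeff_X_mul_X _ hij,
      if_pos rfl] at this
    exact (isUnit_neg_one.pow i).ne_zero this
  · rintro _ ⟨_, ⟨c, d, hc, hcd, hd, rfl⟩, rfl⟩
    rw [hankelPerm, map_add, map_mul, map_mul, rename_xv hc (by omega),
      rename_xv (by omega) (by omega), rename_xv (by omega) (by omega),
      rename_xv (by omega) (by omega)]
    exact ⟨((isHomogeneous_X _ _).mul (isHomogeneous_X _ _)).add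
      ((isHomogeneous_X _ _).mul (isHomogeneous_X _ _)), altCoeff_X_mul_X_add_X_mul_X _ hcd⟩

theorem hankelPerm_mem_P2 {c d : ℕ} (hc : 1 ≤ c) (hd : 1 ≤ d) (hc' : c ≤ n) (hd' : d ≤ n)
    (hcd : c ≠ d) : hankelPerm K n c d ∈ P2 K 2 n := by
  rw [P2_two_eq_span]
  rcases hcd.lt_or_gt with h | h
  · exact Ideal.subset_span ⟨c, d, hc, h, hd', rfl⟩
  · rw [show hankelPerm K n c d = hankelPerm K n d c from add_comm _ _]
    exact Ideal.subset_span ⟨d, c, hd, h, hc', rfl⟩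

end CommRing

section Field

variable [Field K]

local notation "x" => xv K (2 + n - 1)

theorem xv_mul_xv_mul_xv_mem_P2 (hK : ringChar K ≠ 2) (a b c : ℕ) (ha : 1 ≤ a := by omega)
    (hb : 1 ≤ b := by omega) (hc : 2 ≤ c := by omega) (ha' : a ≤ n := by omega)
    (hb' : b ≤ n := by omega) (hc' : c ≤ n + 1 := by omega) (hab : a ≠ b := by omega)
    (hac : a ≠ c - 1 := by omega) (hbc : b ≠ c - 1 := by omega) :
    x a * x b * x c ∈ P2 K 2 n := by
  obtain ⟨c, rfl⟩ : ∃ c₀, c = c₀ + 1 := ⟨c - 1, by omega⟩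
  simp only [Nat.add_sub_cancel] at hac hbc
  have key : 2 * (x a * x b * x (c + 1)) =
      x a * hankelPerm K n b c + x b * hankelPerm K n a c - x c * hankelPerm K n a b := by
    simp only [hankelPerm]
    ring
  refine mem_of_two_mul_mem hK ?_
  rw [key]
  exact sub_mem
    (add_mem (Ideal.mul_mem_left _ _ (hankelPerm_mem_P2 hb (by omega) hb' (by omega) hbc))
      (Ideal.mul_mem_left _ _ (hankelPerm_mem_P2 ha (by omega) ha' (by omega) hac)))
    (Ideal.mul_mem_left _ _ (hankelPerm_mem_P2 ha hb ha' hb' hab))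

theorem xv_mul_xv_mul_xv_mem_P2' (hK : ringChar K ≠ 2) (a b c : ℕ) (ha : 2 ≤ a := by omega)
    (hb : 1 ≤ b := by omega) (hc : 2 ≤ c := by omega) (ha' : a ≤ n + 1 := by omega)
    (hb' : b ≤ n := by omega) (hc' : c ≤ n + 1 := by omega) (hab : a - 1 ≠ b := by omega)
    (hac : a - 1 ≠ c - 1 := by omega) (hbc : b ≠ c - 1 := by omega) :
    x a * x b * x c ∈ P2 K 2 n := by
  obtain ⟨a, rfl⟩ : ∃ a₀, a = a₀ + 1 := ⟨a - 1, by omega⟩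
  obtain ⟨c, rfl⟩ : ∃ c₀, c = c₀ + 1 := ⟨c - 1, by omega⟩
  simp only [Nat.add_sub_cancel] at hab hac hbc
  have key : 2 * (x (a + 1) * x b * x (c + 1)) =
      x (a + 1) * hankelPerm K n b c + x (c + 1) * hankelPerm K n a b
        - x (b + 1) * hankelPerm K n a c := by
    simp only [hankelPerm]
    ring
  refine mem_of_two_mul_mem hK ?_
  rw [key]
  exact sub_mem
    (add_mem (Ideal.mul_mem_left _ _ (hankelPerm_mem_P2 hb (by omega) hb' (by omega) hbc))
      (Ideal.mul_mem_left _ _ (hankelPerm_mem_P2 (by omega) hb (by omega) hb' hab)))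
    (Ideal.mul_mem_left _ _ (hankelPerm_mem_P2 (by omega) (by omega) (by omega) (by omega) hac))

theorem xv_mul_witness_mem_P2 (hK : ringChar K ≠ 2) {i j k : ℕ} (hi : 2 ≤ i)
    (hi' : i ≤ n - 2) (hj : 4 ≤ j) (hj' : j ≤ n) (hij : i < j) (hk : 1 ≤ k) (hk' : k ≤ n + 1) :
    x k * (x i * x j) ∈ P2 K 2 n := by
  rcases (by omega : i + 2 ≤ j ∨ j = i + 1) with hj₂ | rfl
  · rcases (by omega : (k ≤ n ∧ k ≠ i ∧ k ≠ j - 1) ∨ k = i ∨ (k = j - 1 ∧ i + 3 ≤ j) ∨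
        (k = j - 1 ∧ j = i + 2) ∨ (k = n + 1 ∧ j < n) ∨ (k = n + 1 ∧ j = n))
      with h | h | h | h | h | h
    · simpa only [mul_assoc] using xv_mul_xv_mul_xv_mem_P2 hK k i j
    · simpa only [mul_comm, mul_left_comm, mul_assoc] using xv_mul_xv_mul_xv_mem_P2' hK i k j
    · simpa only [mul_comm, mul_left_comm, mul_assoc] using xv_mul_xv_mul_xv_mem_P2' hK k i j
    · simpa only [mul_comm, mul_left_comm, mul_assoc] using xv_mul_xv_mul_xv_mem_P2' hK i j k
    · simpa only [mul_comm, mul_left_comm, mul_assoc] using xv_mul_xv_mul_xv_mem_P2 hK i j k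
    · simpa only [mul_comm, mul_left_comm, mul_assoc] using xv_mul_xv_mul_xv_mem_P2' hK j i k
  · rcases (by omega : (k ≤ n ∧ k + 1 ≠ i ∧ k ≠ i) ∨ k + 1 = i ∨ k = i ∨ k = n + 1)
      with h | h | h | h
    · simpa only [mul_comm, mul_left_comm, mul_assoc] using
        xv_mul_xv_mul_xv_mem_P2' hK i k (i + 1)
    · simpa only [mul_comm, mul_left_comm, mul_assoc] using
        xv_mul_xv_mul_xv_mem_P2 hK i (i + 1) k
    · simpa only [mul_comm, mul_left_comm, mul_assoc] using
        xv_mul_xv_mul_xv_mem_P2 hK k (i + 1) i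
    · simpa only [mul_comm, mul_left_comm, mul_assoc] using
        xv_mul_xv_mul_xv_mem_P2 hK i (i + 1) k

end Field

end HankelPermanent

theorem stmt17_general {K : Type*} [Field K] (hK : ringChar K ≠ 2) (n : ℕ)
    (i j : ℕ) (hi : 2 ≤ i) (hi' : i ≤ n - 2) (hj : 4 ≤ j) (hj' : j ≤ n)
    (hij : i < j) :
    xv K (2 + n - 1) i * xv K (2 + n - 1) j ∉ P2 K 2 n ∧
    (∀ k : ℕ, 1 ≤ k → k ≤ n + 1 →
      xv K (2 + n - 1) k * (xv K (2 + n - 1) i * xv K (2 + n - 1) j) ∈ P2 K 2 n) ∧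
    Submodule.colon (P2 K 2 n)
        (Ideal.span {xv K (2 + n - 1) i * xv K (2 + n - 1) j}) =
      Ideal.span { p : MvPolynomial (Fin (2 + n - 1)) K |
        ∃ k : ℕ, 1 ≤ k ∧ k ≤ n + 1 ∧ p = xv K (2 + n - 1) k } := by
  have hα : xv K (2 + n - 1) i * xv K (2 + n - 1) j ∉ P2 K 2 n :=
    HankelPermanent.xv_mul_xv_notMem_P2 (by omega) (by omega) (by omega) (by omega)
  have hmem := fun k (hk : 1 ≤ k) (hk' : k ≤ n + 1) =>
    HankelPermanent.xv_mul_witness_mem_P2 hK hi hi' hj hj' hij hk hk'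
  refine ⟨hα, hmem, ?_⟩
  rw [HankelPermanent.setOf_xv_eq_range_X]
  refine colon_span_singleton_eq_idealOfVars hα fun a => ?_
  rw [← HankelPermanent.xv_val_add_one]
  exact hmem _ (by omega) (by omega)

/-- For the 2×n Hankel matrix with `n ≥ 4`, the maximal ideal `(x_1, …, x_{n+1})` is
an associated prime of `P_2(M)`: for `α = x_i x_j` with `2 ≤ i ≤ n-2`, `4 ≤ j ≤ n`,
`i < j`, we have `α ∉ P_2(M)`, `(x_1, …, x_{n+1})·α ⊆ P_2(M)`, and
`(P_2(M) : α) = (x_1, …, x_{n+1})`. -/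
theorem stmt17 {K : Type*} [Field K] (hK : ringChar K ≠ 2) (n : ℕ) (hn : 4 ≤ n)
    (i j : ℕ) (hi : 2 ≤ i) (hi' : i ≤ n - 2) (hj : 4 ≤ j) (hj' : j ≤ n)
    (hij : i < j) :
    xv K (2 + n - 1) i * xv K (2 + n - 1) j ∉ P2 K 2 n ∧
    (∀ k : ℕ, 1 ≤ k → k ≤ n + 1 →
      xv K (2 + n - 1) k * (xv K (2 + n - 1) i * xv K (2 + n - 1) j) ∈ P2 K 2 n) ∧
    Submodule.colon (P2 K 2 n)
        (Ideal.span {xv K (2 + n - 1) i * xv K (2 + n - 1) j}) =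
      Ideal.span { p : MvPolynomial (Fin (2 + n - 1)) K |
        ∃ k : ℕ, 1 ≤ k ∧ k ≤ n + 1 ∧ p = xv K (2 + n - 1) k } :=
  stmt17_general hK n i j hi hi' hj hj' hij
end

section
/- Let M be the 2×3 Hankel matrix over K of characteristic ≠2. Then P_2(M)=Q_1∩Q_2, where Q_1=(x_1^2, x_1x_2, x_1x_3, x_2^2, x_1x_4+x_2x_3, x_2x_4+x_3^2) and Q_2=(x_2x_4, x_3^2, x_3x_4, x_4^2, x_1x_3+x_2^2, x_1x_4+x_2x_3); in particular P_2(M) is the intersection of its two minimal primary components and has no embedded component. -/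
open MvPolynomial

namespace Stmt19Aux

noncomputable section

variable (K : Type*) [Field K]

abbrev R' := MvPolynomial (Fin 4) K

def f1 : R' K := X 0 * X 2 + X 1 ^ 2
def f2 : R' K := X 0 * X 3 + X 1 * X 2
def f3 : R' K := X 1 * X 3 + X 2 ^ 2

def P2' : Ideal (R' K) := Ideal.span {f1 K, f2 K, f3 K}

def J1 : Ideal (R' K) := Ideal.span {(X 0 : R' K) ^ 2, X 0 * X 1, (X 1 : R' K) ^ 2}
def J2 : Ideal (R' K) := Ideal.span {(X 2 : R' K) ^ 2, X 2 * X 3, (X 3 : R' K) ^ 2}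
def I3 : Ideal (R' K) := Ideal.span {(X 1 : R' K), X 2, X 3}

def Q1 : Ideal (R' K) := Ideal.span
  {(X 0 : R' K) ^ 2, X 0 * X 1, X 0 * X 2, (X 1 : R' K) ^ 2,
    X 0 * X 3 + X 1 * X 2, X 1 * X 3 + (X 2 : R' K) ^ 2}
def Q2 : Ideal (R' K) := Ideal.span
  {(X 1 : R' K) * X 3, (X 2 : R' K) ^ 2, X 2 * X 3, (X 3 : R' K) ^ 2,
    X 0 * X 2 + (X 1 : R' K) ^ 2, X 0 * X 3 + X 1 * X 2}

def φv : Fin 4 → Polynomial (Polynomial K) :=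
  ![Polynomial.C Polynomial.X, Polynomial.C Polynomial.X * Polynomial.X,
    -(Polynomial.C Polynomial.X * Polynomial.X ^ 2), Polynomial.C Polynomial.X * Polynomial.X ^ 3]

def φ : R' K →ₐ[K] Polynomial (Polynomial K) := aeval (φv K)

def ψ : R' K →+* Polynomial K := Polynomial.constantCoeff.comp (φ K).toRingHom

end

variable {K : Type*} [Field K]

lemma ψ_apply (p : R' K) : ψ K p = Polynomial.constantCoeff (φ K p) := rfl

lemma φ_X0 : φ K (X 0) = Polynomial.C Polynomial.X := by
  simp [φ, aeval_X, φv]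
lemma φ_X1 : φ K (X 1) = Polynomial.C Polynomial.X * Polynomial.X := by
  simp [φ, aeval_X, φv]
lemma φ_X2 : φ K (X 2) = -(Polynomial.C Polynomial.X * Polynomial.X ^ 2) := by
  simp [φ, aeval_X, φv]
lemma φ_X3 : φ K (X 3) = Polynomial.C Polynomial.X * Polynomial.X ^ 3 := by
  simp [φ, aeval_X, φv]

lemma ψ_X0 : ψ K (X 0) = Polynomial.X := by
  simp [ψ_apply, φ_X0]
lemma ψ_X1 : ψ K (X 1) = 0 := by
  simp [ψ_apply, φ_X1]
lemma ψ_X2 : ψ K (X 2) = 0 := by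
  simp [ψ_apply, φ_X2]
lemma ψ_X3 : ψ K (X 3) = 0 := by
  simp [ψ_apply, φ_X3]

lemma mem_span_triple {A : Type*} [CommRing A] {a m1 m2 m3 : A}
    (h : a ∈ Ideal.span {m1, m2, m3}) : ∃ u v w, a = u * m1 + v * m2 + w * m3 := by
  rw [Ideal.mem_span_insert] at h
  obtain ⟨u, z, hz, rfl⟩ := h
  rw [Ideal.mem_span_insert] at hz
  obtain ⟨v, z2, hz2, rfl⟩ := hz
  rw [Ideal.mem_span_singleton'] at hz2
  obtain ⟨w, rfl⟩ := hz2
  exact ⟨u, v, w, by ring⟩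

lemma comboMem (c1 c2 c3 : R' K) : c1 * f1 K + c2 * f2 K + c3 * f3 K ∈ P2' K := by
  have h1 : f1 K ∈ P2' K := Ideal.subset_span (by
    simp only [Set.mem_insert_iff, Set.mem_singleton_iff]; tauto)
  have h2 : f2 K ∈ P2' K := Ideal.subset_span (by
    simp only [Set.mem_insert_iff, Set.mem_singleton_iff]; tauto)
  have h3 : f3 K ∈ P2' K := Ideal.subset_span (by
    simp only [Set.mem_insert_iff, Set.mem_singleton_iff]; tauto)
  exact add_mem (add_mem (Ideal.mul_mem_left _ _ h1) (Ideal.mul_mem_left _ _ h2))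
    (Ideal.mul_mem_left _ _ h3)

lemma halfMem (h2 : (2 : K) ≠ 0) {t : R' K} (c1 c2 c3 : R' K)
    (h : 2 * t = c1 * f1 K + c2 * f2 K + c3 * f3 K) : t ∈ P2' K := by
  have key : t = C ((2 : K)⁻¹) * (2 * t) := by
    rw [show ((2 : R' K)) = C (2 : K) from (map_ofNat C 2).symm]
    rw [← mul_assoc, ← map_mul, inv_mul_cancel₀ h2, map_one, one_mul]
  rw [key, h]
  exact Ideal.mul_mem_left _ _ (comboMem c1 c2 c3)

/-- every μ with ψ μ = 0 is in (x2,x3,x4) -/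
lemma mem_I3_of_psi (μ : R' K) (h : ψ K μ = 0) : μ ∈ I3 K := by
  have main : ∀ ν : R' K, ν - Polynomial.aeval (X 0 : R' K) (ψ K ν) ∈ I3 K := by
    intro ν
    induction ν using MvPolynomial.induction_on with
    | C a =>
        have : ψ K (C a) = Polynomial.C a := by
          simp [ψ_apply, φ, algHom_C, algebraMap_eq]
        rw [this]
        simp
    | add p q hp hq =>
        have := add_mem hp hq
        convert this using 1
        rw [map_add, map_add]
        ring
    | mul_X p i hp =>
        fin_cases i
        · -- i = 0
          show p * X 0 - Polynomial.aeval (X 0 : R' K) (ψ K (p * X 0)) ∈ I3 K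
          have h0 : ψ K (p * X 0) = ψ K p * Polynomial.X := by rw [map_mul, ψ_X0]
          rw [h0, map_mul, Polynomial.aeval_X]
          have := Ideal.mul_mem_right (X 0) _ hp
          convert this using 1
          ring
        · show p * X 1 - Polynomial.aeval (X 0 : R' K) (ψ K (p * X 1)) ∈ I3 K
          have h0 : ψ K (p * X 1) = 0 := by rw [map_mul, ψ_X1, mul_zero]
          rw [h0, map_zero, sub_zero]
          exact Ideal.mul_mem_left _ _ (Ideal.subset_span (by simp only [I3, Set.mem_insert_iff, Set.mem_singleton_iff]; tauto))
        · show p * X 2 - Polynomial.aeval (X 0 : R' K) (ψ K (p * X 2)) ∈ I3 K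
          have h0 : ψ K (p * X 2) = 0 := by rw [map_mul, ψ_X2, mul_zero]
          rw [h0, map_zero, sub_zero]
          exact Ideal.mul_mem_left _ _ (Ideal.subset_span (by simp only [I3, Set.mem_insert_iff, Set.mem_singleton_iff]; tauto))
        · show p * X 3 - Polynomial.aeval (X 0 : R' K) (ψ K (p * X 3)) ∈ I3 K
          have h0 : ψ K (p * X 3) = 0 := by rw [map_mul, ψ_X3, mul_zero]
          rw [h0, map_zero, sub_zero]
          exact Ideal.mul_mem_left _ _ (Ideal.subset_span (by simp only [I3, Set.mem_insert_iff, Set.mem_singleton_iff]; tauto))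
  have := main μ
  rwa [h, map_zero, sub_zero] at this

lemma psi_kills (p : R' K) (hp : p ∈ P2' K ⊔ J2 K) : ψ K p = 0 := by
  have hsp : P2' K ⊔ J2 K = Ideal.span ({f1 K, f2 K, f3 K} ∪
      {(X 2 : R' K) ^ 2, X 2 * X 3, (X 3 : R' K) ^ 2}) := by
    rw [Ideal.span_union]; rfl
  rw [hsp] at hp
  have hmap := Ideal.mem_map_of_mem (ψ K) hp
  rw [Ideal.map_span] at hmap
  have hle : (ψ K) '' ({f1 K, f2 K, f3 K} ∪
      {(X 2 : R' K) ^ 2, X 2 * X 3, (X 3 : R' K) ^ 2}) ⊆ (⊥ : Ideal (Polynomial K)) := by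
    rintro _ ⟨q, hq, rfl⟩
    simp only [Set.mem_union, Set.mem_insert_iff, Set.mem_singleton_iff] at hq
    rcases hq with (rfl | rfl | rfl) | (rfl | rfl | rfl) <;>
      simp [f1, f2, f3, map_add, map_mul, map_pow, ψ_X0, ψ_X1, ψ_X2, ψ_X3]
  have := (Ideal.span_le.mpr hle) hmap
  simpa using this

lemma phi_into (p : R' K) (hp : p ∈ P2' K ⊔ J2 K) :
    φ K p ∈ Ideal.span {(Polynomial.X : Polynomial (Polynomial K)) ^ 4} := by
  have hsp : P2' K ⊔ J2 K = Ideal.span ({f1 K, f2 K, f3 K} ∪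
      {(X 2 : R' K) ^ 2, X 2 * X 3, (X 3 : R' K) ^ 2}) := by
    rw [Ideal.span_union]; rfl
  rw [hsp] at hp
  have hmap := Ideal.mem_map_of_mem (φ K) hp
  rw [Ideal.map_span] at hmap
  refine (Ideal.span_le.mpr ?_) hmap
  rintro _ ⟨q, hq, rfl⟩
  simp only [Set.mem_union, Set.mem_insert_iff, Set.mem_singleton_iff] at hq
  rw [SetLike.mem_coe, Ideal.mem_span_singleton]
  rcases hq with (rfl | rfl | rfl) | (rfl | rfl | rfl)
  · exact ⟨0, by simp only [f1, map_add, map_mul, map_pow, φ_X0, φ_X1, φ_X2]; ring⟩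
  · exact ⟨0, by simp only [f2, map_add, map_mul, map_pow, φ_X0, φ_X1, φ_X2, φ_X3]; ring⟩
  · exact ⟨2 * Polynomial.C Polynomial.X ^ 2,
      by simp only [f3, map_add, map_mul, map_pow, φ_X1, φ_X2, φ_X3]; ring⟩
  · exact ⟨Polynomial.C Polynomial.X ^ 2,
      by simp only [map_pow, φ_X2]; ring⟩
  · exact ⟨-(Polynomial.C Polynomial.X ^ 2 * Polynomial.X),
      by simp only [map_mul, φ_X2, φ_X3]; ring⟩
  · exact ⟨Polynomial.C Polynomial.X ^ 2 * Polynomial.X ^ 2,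
      by simp only [map_pow, φ_X3]; ring⟩

lemma coeff_lt_four (p : Polynomial (Polynomial K)) (k : ℕ) (hk : k < 4)
    (hp : p ∈ Ideal.span {(Polynomial.X : Polynomial (Polynomial K)) ^ 4}) :
    p.coeff k = 0 := by
  rw [Ideal.mem_span_singleton] at hp
  obtain ⟨t, rfl⟩ := hp
  rw [mul_comm, Polynomial.coeff_mul_X_pow']
  simp [Nat.not_le.mpr hk]

lemma coeff_term_eq (q : Polynomial (Polynomial K)) (p : Polynomial K) (m : ℕ) :
    (q * (Polynomial.C p * Polynomial.X ^ m)).coeff m = q.coeff 0 * p := by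
  rw [show q * (Polynomial.C p * Polynomial.X ^ m) = q * Polynomial.C p * Polynomial.X ^ m by ring]
  rw [Polynomial.coeff_mul_X_pow', if_pos (le_refl m), Nat.sub_self, Polynomial.coeff_mul_C]

lemma coeff_term_zero (q : Polynomial (Polynomial K)) (p : Polynomial K) (m k : ℕ) (h : k < m) :
    (q * (Polynomial.C p * Polynomial.X ^ m)).coeff k = 0 := by
  rw [show q * (Polynomial.C p * Polynomial.X ^ m) = q * Polynomial.C p * Polynomial.X ^ m by ring]
  rw [Polynomial.coeff_mul_X_pow']
  simp [Nat.not_le.mpr h]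

lemma psi_eq_zero_of_mul (p : Polynomial K) (n : ℕ) (h : p * Polynomial.X ^ n = 0) : p = 0 := by
  rcases mul_eq_zero.mp h with h' | h'
  · exact h'
  · exact absurd h' (pow_ne_zero _ Polynomial.X_ne_zero)

/-- The key containment: J1 ∩ (P2' + J2) ⊆ P2'. -/
lemma key (h2 : (2 : K) ≠ 0) {a : R' K} (haJ : a ∈ J1 K) (haS : a ∈ P2' K ⊔ J2 K) :
    a ∈ P2' K := by
  obtain ⟨α, β, γ, ha⟩ := mem_span_triple haJ
  subst ha
  -- Stage 0 : ψ a = 0 forces α ∈ I3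
  have hψa := psi_kills _ haS
  have hψa' : ψ K α * Polynomial.X ^ 2 = 0 := by
    rw [← hψa]
    simp only [map_add, map_mul, map_pow, ψ_X0, ψ_X1]
    ring
  obtain ⟨u, v, w, hα⟩ := mem_span_triple
    (mem_I3_of_psi α (psi_eq_zero_of_mul _ 2 hψa'))
  subst hα
  set β₁ : R' K := u * X 0 + β - v * X 1 with hβ₁def
  set γ₁ : R' K := γ + w * X 1 with hγ₁def
  set a1 : R' K := β₁ * (X 0 * X 1) + γ₁ * X 1 ^ 2 with ha1def
  set a0 : R' K := (u * X 1 + v * X 2 + w * X 3) * X 0 ^ 2 + β * (X 0 * X 1) + γ * X 1 ^ 2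
    with ha0def
  have hd0 : a0 - a1 ∈ P2' K := by
    have : a0 - a1 = (v * X 0 - w * X 1) * f1 K + (w * X 0) * f2 K + 0 * f3 K := by
      rw [ha0def, ha1def, hβ₁def, hγ₁def, f1, f2, f3]; ring
    rw [this]; exact comboMem _ _ _
  have ha1S : a1 ∈ P2' K ⊔ J2 K := by
    have : a1 = a0 - (a0 - a1) := by ring
    rw [this]
    exact sub_mem haS (Submodule.mem_sup_left hd0)
  -- Stage 1 : coeff 1 of φ a1 forces β₁ ∈ I3
  have hφ1 := phi_into _ ha1S
  have hc1 : (φ K a1).coeff 1 = ψ K β₁ * Polynomial.X ^ 2 := by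
    have hrw : φ K a1 = φ K β₁ * (Polynomial.C (Polynomial.X ^ 2) * Polynomial.X ^ 1)
        + φ K γ₁ * (Polynomial.C (Polynomial.X ^ 2) * Polynomial.X ^ 2) := by
      simp only [ha1def, map_add, map_mul, map_pow, φ_X0, φ_X1]
      ring
    rw [hrw, Polynomial.coeff_add, coeff_term_eq, coeff_term_zero _ _ 2 1 (by norm_num),
      add_zero, ψ_apply]
    rfl
  have hβ₁I : β₁ ∈ I3 K := by
    apply mem_I3_of_psi
    apply psi_eq_zero_of_mul _ 2
    rw [← hc1]
    exact coeff_lt_four _ 1 (by norm_num) hφ1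
  obtain ⟨u', v', w', hβ⟩ := mem_span_triple hβ₁I
  set γ₂ : R' K := γ₁ + u' * X 0 - v' * X 1 with hγ₂def
  set a2 : R' K := γ₂ * X 1 ^ 2 with ha2def
  have hd1 : a1 - a2 ∈ P2' K := by
    apply halfMem h2 (2 * v' * X 1 - w' * X 2) (w' * X 1) (w' * X 0)
    rw [ha1def, ha2def, hγ₂def, hβ, f1, f2, f3]; ring
  have ha2S : a2 ∈ P2' K ⊔ J2 K := by
    have : a2 = a1 - (a1 - a2) := by ring
    rw [this]
    exact sub_mem ha1S (Submodule.mem_sup_left hd1)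
  -- Stage 2 : coeff 2 of φ a2 forces γ₂ ∈ I3
  have hφ2 := phi_into _ ha2S
  have hc2 : (φ K a2).coeff 2 = ψ K γ₂ * Polynomial.X ^ 2 := by
    have hrw : φ K a2 = φ K γ₂ * (Polynomial.C (Polynomial.X ^ 2) * Polynomial.X ^ 2) := by
      simp only [ha2def, map_mul, map_pow, φ_X1]
      ring
    rw [hrw, coeff_term_eq, ψ_apply]
    rfl
  have hγ₂I : γ₂ ∈ I3 K := by
    apply mem_I3_of_psi
    apply psi_eq_zero_of_mul _ 2
    rw [← hc2]
    exact coeff_lt_four _ 2 (by norm_num) hφ2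
  obtain ⟨u'', v'', w'', hγ₂⟩ := mem_span_triple hγ₂I
  set a3 : R' K := u'' * X 1 ^ 3 with ha3def
  have hd2 : a2 - a3 ∈ P2' K := by
    apply halfMem h2 (v'' * X 2 + w'' * X 3) (v'' * X 1 - w'' * X 2) (w'' * X 1 - v'' * X 0)
    rw [ha2def, ha3def, hγ₂, f1, f2, f3]; ring
  have ha3S : a3 ∈ P2' K ⊔ J2 K := by
    have : a3 = a2 - (a2 - a3) := by ring
    rw [this]
    exact sub_mem ha2S (Submodule.mem_sup_left hd2)
  -- Stage 3 : coeff 3 of φ a3 forces u'' ∈ I3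
  have hφ3 := phi_into _ ha3S
  have hc3 : (φ K a3).coeff 3 = ψ K u'' * Polynomial.X ^ 3 := by
    have hrw : φ K a3 = φ K u'' * (Polynomial.C (Polynomial.X ^ 3) * Polynomial.X ^ 3) := by
      simp only [ha3def, map_mul, map_pow, φ_X1]
      ring
    rw [hrw, coeff_term_eq, ψ_apply]
    rfl
  have hu''I : u'' ∈ I3 K := by
    apply mem_I3_of_psi
    apply psi_eq_zero_of_mul _ 3
    rw [← hc3]
    exact coeff_lt_four _ 3 (by norm_num) hφ3
  obtain ⟨p, q, r, hu''⟩ := mem_span_triple hu''I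
  have hd3 : a3 ∈ P2' K := by
    apply halfMem h2
      (2 * p * X 1 ^ 2 - p * X 0 * X 2 + q * X 1 * X 2 + r * X 1 * X 3)
      (-(p * X 0 * X 1) + q * X 1 ^ 2 - r * X 1 * X 2)
      (p * X 0 ^ 2 - q * X 0 * X 1 + r * X 1 ^ 2)
    rw [ha3def, hu'', f1, f2, f3]; ring
  have : a0 = (a0 - a1) + (a1 - a2) + (a2 - a3) + a3 := by ring
  rw [this]
  exact add_mem (add_mem (add_mem hd0 hd1) hd2) hd3

lemma Q1_le : Q1 K ≤ P2' K ⊔ J1 K := by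
  rw [Q1, Ideal.span_le]
  intro p hp
  simp only [Set.mem_insert_iff, Set.mem_singleton_iff] at hp
  rcases hp with rfl | rfl | rfl | rfl | rfl | rfl
  · exact Submodule.mem_sup_right (Ideal.subset_span (by simp only [J1, Set.mem_insert_iff, Set.mem_singleton_iff]; tauto))
  · exact Submodule.mem_sup_right (Ideal.subset_span (by simp only [J1, Set.mem_insert_iff, Set.mem_singleton_iff]; tauto))
  · -- x1 x3 = f1 - x2^2
    have : (X 0 : R' K) * X 2 = f1 K - X 1 ^ 2 := by rw [f1]; ring
    rw [SetLike.mem_coe, this]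
    exact sub_mem (Submodule.mem_sup_left (Ideal.subset_span (by simp only [P2', Set.mem_insert_iff, Set.mem_singleton_iff]; tauto)))
      (Submodule.mem_sup_right (Ideal.subset_span (by simp only [J1, Set.mem_insert_iff, Set.mem_singleton_iff]; tauto)))
  · exact Submodule.mem_sup_right (Ideal.subset_span (by simp only [J1, Set.mem_insert_iff, Set.mem_singleton_iff]; tauto))
  · exact Submodule.mem_sup_left (Ideal.subset_span (by simp only [P2', f2, Set.mem_insert_iff, Set.mem_singleton_iff]; tauto))
  · exact Submodule.mem_sup_left (Ideal.subset_span (by simp only [P2', f3, Set.mem_insert_iff, Set.mem_singleton_iff]; tauto))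

lemma Q2_le : Q2 K ≤ P2' K ⊔ J2 K := by
  rw [Q2, Ideal.span_le]
  intro p hp
  simp only [Set.mem_insert_iff, Set.mem_singleton_iff] at hp
  rcases hp with rfl | rfl | rfl | rfl | rfl | rfl
  · -- x2 x4 = f3 - x3^2
    have : (X 1 : R' K) * X 3 = f3 K - X 2 ^ 2 := by rw [f3]; ring
    rw [SetLike.mem_coe, this]
    exact sub_mem (Submodule.mem_sup_left (Ideal.subset_span (by simp only [P2', Set.mem_insert_iff, Set.mem_singleton_iff]; tauto)))
      (Submodule.mem_sup_right (Ideal.subset_span (by simp only [J2, Set.mem_insert_iff, Set.mem_singleton_iff]; tauto)))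
  · exact Submodule.mem_sup_right (Ideal.subset_span (by simp only [J2, Set.mem_insert_iff, Set.mem_singleton_iff]; tauto))
  · exact Submodule.mem_sup_right (Ideal.subset_span (by simp only [J2, Set.mem_insert_iff, Set.mem_singleton_iff]; tauto))
  · exact Submodule.mem_sup_right (Ideal.subset_span (by simp only [J2, Set.mem_insert_iff, Set.mem_singleton_iff]; tauto))
  · exact Submodule.mem_sup_left (Ideal.subset_span (by simp only [P2', f1, Set.mem_insert_iff, Set.mem_singleton_iff]; tauto))
  · exact Submodule.mem_sup_left (Ideal.subset_span (by simp only [P2', f2, Set.mem_insert_iff, Set.mem_singleton_iff]; tauto))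

lemma P2'_le_Q1 : P2' K ≤ Q1 K := by
  rw [P2', Ideal.span_le]
  intro p hp
  simp only [Set.mem_insert_iff, Set.mem_singleton_iff] at hp
  rcases hp with rfl | rfl | rfl
  · -- f1 = x1x3 + x2^2
    rw [SetLike.mem_coe, f1]
    exact add_mem (Ideal.subset_span (by simp only [Q1, Set.mem_insert_iff, Set.mem_singleton_iff]; tauto))
      (Ideal.subset_span (by simp only [Q1, Set.mem_insert_iff, Set.mem_singleton_iff]; tauto))
  · exact Ideal.subset_span (by simp only [Q1, f2, Set.mem_insert_iff, Set.mem_singleton_iff]; tauto)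
  · exact Ideal.subset_span (by simp only [Q1, f3, Set.mem_insert_iff, Set.mem_singleton_iff]; tauto)

lemma P2'_le_Q2 : P2' K ≤ Q2 K := by
  rw [P2', Ideal.span_le]
  intro p hp
  simp only [Set.mem_insert_iff, Set.mem_singleton_iff] at hp
  rcases hp with rfl | rfl | rfl
  · exact Ideal.subset_span (by simp only [Q2, f1, Set.mem_insert_iff, Set.mem_singleton_iff]; tauto)
  · exact Ideal.subset_span (by simp only [Q2, f2, Set.mem_insert_iff, Set.mem_singleton_iff]; tauto)
  · rw [SetLike.mem_coe, f3]
    exact add_mem (Ideal.subset_span (by simp only [Q2, Set.mem_insert_iff, Set.mem_singleton_iff]; tauto))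
      (Ideal.subset_span (by simp only [Q2, Set.mem_insert_iff, Set.mem_singleton_iff]; tauto))

lemma main_eq (h2 : (2 : K) ≠ 0) : P2' K = Q1 K ⊓ Q2 K := by
  apply le_antisymm
  · exact le_inf (P2'_le_Q1) (P2'_le_Q2)
  · intro g hg
    obtain ⟨hg1, hg2⟩ := hg
    have hg1' : g ∈ P2' K ⊔ J1 K := Q1_le hg1
    have hg2' : g ∈ P2' K ⊔ J2 K := Q2_le hg2
    obtain ⟨p, hp, b, hb, rfl⟩ := Submodule.mem_sup.mp hg1'
    have hbS : b ∈ P2' K ⊔ J2 K := by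
      have : b = p + b - p := by ring
      rw [this]
      exact sub_mem hg2' (Submodule.mem_sup_left hp)
    exact add_mem hp (key h2 hb hbS)

end Stmt19Aux

open Stmt19Aux in
/-- For the 2×3 Hankel matrix, `P_2(M) = Q_1 ∩ Q_2`, the intersection of its two
minimal primary components; in particular there is no embedded component. -/
theorem stmt19 {K : Type*} [Field K] (hK : ringChar K ≠ 2) :
    P2 K 2 3 =
      Ideal.span ({xv K (2 + 3 - 1) 1 ^ 2,
        xv K (2 + 3 - 1) 1 * xv K (2 + 3 - 1) 2,
        xv K (2 + 3 - 1) 1 * xv K (2 + 3 - 1) 3,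
        xv K (2 + 3 - 1) 2 ^ 2,
        xv K (2 + 3 - 1) 1 * xv K (2 + 3 - 1) 4
          + xv K (2 + 3 - 1) 2 * xv K (2 + 3 - 1) 3,
        xv K (2 + 3 - 1) 2 * xv K (2 + 3 - 1) 4 + xv K (2 + 3 - 1) 3 ^ 2} :
          Set (MvPolynomial (Fin (2 + 3 - 1)) K)) ⊓
      Ideal.span ({xv K (2 + 3 - 1) 2 * xv K (2 + 3 - 1) 4,
        xv K (2 + 3 - 1) 3 ^ 2,
        xv K (2 + 3 - 1) 3 * xv K (2 + 3 - 1) 4,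
        xv K (2 + 3 - 1) 4 ^ 2,
        xv K (2 + 3 - 1) 1 * xv K (2 + 3 - 1) 3 + xv K (2 + 3 - 1) 2 ^ 2,
        xv K (2 + 3 - 1) 1 * xv K (2 + 3 - 1) 4
          + xv K (2 + 3 - 1) 2 * xv K (2 + 3 - 1) 3} :
          Set (MvPolynomial (Fin (2 + 3 - 1)) K)) := by
  have h2 : (2 : K) ≠ 0 := by
    intro h
    have hd : ringChar K ∣ 2 := by
      have : ((2 : ℕ) : K) = 0 := by exact_mod_cast h
      exact (CharP.cast_eq_zero_iff K (ringChar K) 2).mp this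
    rcases (Nat.dvd_prime Nat.prime_two).mp hd with h1 | h1
    · have : ((1 : ℕ) : K) = 0 :=
        (CharP.cast_eq_zero_iff K (ringChar K) 1).mpr (h1 ▸ dvd_refl _)
      simp at this
    · exact hK h1
  -- identify P2 K 2 3 with P2' K
  have hxv1 : xv K (2 + 3 - 1) 1 = (X 0 : R' K) := rfl
  have hxv2 : xv K (2 + 3 - 1) 2 = (X 1 : R' K) := rfl
  have hxv3 : xv K (2 + 3 - 1) 3 = (X 2 : R' K) := rfl
  have hxv4 : xv K (2 + 3 - 1) 4 = (X 3 : R' K) := rfl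
  have hxv44 : xv K (2 + 3 - 1) (2 + 3 - 1) = (X 3 : R' K) := rfl
  have hP2 : P2 K 2 3 = P2' K := by
    apply le_antisymm
    · rw [P2, Ideal.span_le]
      rintro _ ⟨a, b, c, d, h1a, hab, hb2, h1c, hcd, hd3, rfl⟩
      have ha : a = 1 := by omega
      have hb : b = 2 := by omega
      subst ha hb
      have hc2 : c ≤ 2 := by omega
      interval_cases c <;> interval_cases d
      · -- c = 1, d = 2
        rw [SetLike.mem_coe, P2']
        apply Ideal.subset_span
        simp only [Set.mem_insert_iff, Set.mem_singleton_iff]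
        left
        rw [hxv1, hxv2, hxv3, f1]
        ring
      · -- c = 1, d = 3
        rw [SetLike.mem_coe, P2']
        apply Ideal.subset_span
        simp only [Set.mem_insert_iff, Set.mem_singleton_iff]
        right; left
        rw [hxv44, hxv1, hxv2, hxv3, f2]
        ring
      · -- c = 2, d = 3
        rw [SetLike.mem_coe, P2']
        apply Ideal.subset_span
        simp only [Set.mem_insert_iff, Set.mem_singleton_iff]
        right; right
        rw [hxv44, hxv2, hxv3, f3]
        ring
    · rw [P2', Ideal.span_le]
      intro p hp
      simp only [Set.mem_insert_iff, Set.mem_singleton_iff] at hp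
      rw [SetLike.mem_coe, P2]
      rcases hp with rfl | rfl | rfl
      · exact Ideal.subset_span ⟨1, 2, 1, 2, by norm_num, by norm_num, by norm_num,
          by norm_num, by norm_num, by norm_num,
          by rw [hxv1, hxv2, hxv3, f1]; ring⟩
      · exact Ideal.subset_span ⟨1, 2, 1, 3, by norm_num, by norm_num, by norm_num,
          by norm_num, by norm_num, by norm_num,
          by rw [hxv44, hxv1, hxv2, hxv3, f2]; ring⟩
      · exact Ideal.subset_span ⟨1, 2, 2, 3, by norm_num, by norm_num, by norm_num,
          by norm_num, by norm_num, by norm_num,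
          by rw [hxv44, hxv2, hxv3, f3]; ring⟩
  rw [hxv1, hxv2, hxv3, hxv4, hP2]
  exact main_eq h2
end
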